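/- arXiv:math/0211236 — 8 statements merged into one kernel-verified Lean document; each statement's English description precedes it below -/
import Mathlib

section
/- Let X and Y be complete lattices (sup-lattices) and let p : X ⊗ Y ⊗ X → X be a sup-preserving map satisfying the associativity condition p(p(x₁⊗y₁⊗x₂)⊗y₂⊗x₃) = p(x₁⊗y₁⊗p(x₂⊗y₂⊗x₃)) for all xᵢ ∈ X, yᵢ ∈ Y. Then the set L = {L_a : a ∈ X ⊗ Y}, where L_a(x) = p(a ⊗ x), is closed under composition in the quantale Q(X) of sup-preserving endomaps of X; i.e., for all a, b ∈ X ⊗ Y, L_a ∘ L_b ∈ L. -/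
/-!
Writing `L_S z = ⨆ (x, y) ∈ S, p x y z` for a set `S` of simple tensors, associativity gives
`L_S ∘ L_T = L_{S·T}`, where `S·T` consists of the simple tensors `p x₁ y₁ x₂ ⊗ y₂` for
`(x₁, y₁) ∈ S` and `(x₂, y₂) ∈ T`; the joins can be pulled out because `p` preserves joins in
its last variable.
-/

/-- A map `X ⊗ Y ⊗ X → X` encoded, via the universal property of the sup-lattice
tensor product, as a map preserving arbitrary joins in each variable. -/
def TriSupPreserving {α β γ δ : Type*} [CompleteLattice α] [CompleteLattice β]
    [CompleteLattice γ] [CompleteLattice δ] (p : α → β → γ → δ) : Prop :=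
  (∀ (S : Set α) (y : β) (z : γ), p (sSup S) y z = ⨆ x ∈ S, p x y z) ∧
  (∀ (x : α) (S : Set β) (z : γ), p x (sSup S) z = ⨆ y ∈ S, p x y z) ∧
  (∀ (x : α) (y : β) (S : Set γ), p x y (sSup S) = ⨆ z ∈ S, p x y z)

/-- The set `L = {L_a : a ∈ X ⊗ Y}` of sup-preserving operators on `X`:
every element `a` of the tensor product `X ⊗ Y` is a join of simple tensors,
so `L_a` is a pointwise join of the operators `z ↦ p x y z` over a set of
simple tensors. -/
def Lset {X Y : Type*} [CompleteLattice X] [CompleteLattice Y]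
    (p : X → Y → X → X) : Set (X → X) :=
  {f | ∃ S : Set (X × Y), f = fun z => ⨆ t ∈ S, p t.1 t.2 z}

theorem map_biSup_of_map_sSup {α β ι : Type*} [CompleteLattice α] [CompleteLattice β]
    {f : α → β} (hf : ∀ S : Set α, f (sSup S) = ⨆ a ∈ S, f a) (s : Set ι) (g : ι → α) :
    f (⨆ i ∈ s, g i) = ⨆ i ∈ s, f (g i) := by
  rw [← sSup_image, hf, iSup_image]

section SupAction

variable {X Y : Type*} [CompleteLattice X]

def supAction (p : X → Y → X → X) (S : Set (X × Y)) : X → X :=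
  fun z => ⨆ t ∈ S, p t.1 t.2 z

def supActionMul (p : X → Y → X → X) (S T : Set (X × Y)) : Set (X × Y) :=
  (fun tu : (X × Y) × (X × Y) => (p tu.1.1 tu.1.2 tu.2.1, tu.2.2)) '' (S ×ˢ T)

theorem supAction_comp {p : X → Y → X → X}
    (hp : ∀ (x : X) (y : Y) (S : Set X), p x y (sSup S) = ⨆ z ∈ S, p x y z)
    (assoc : ∀ (x₁ x₂ x₃ : X) (y₁ y₂ : Y), p (p x₁ y₁ x₂) y₂ x₃ = p x₁ y₁ (p x₂ y₂ x₃))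
    (S T : Set (X × Y)) :
    supAction p S ∘ supAction p T = supAction p (supActionMul p S T) := by
  funext z
  calc (⨆ t ∈ S, p t.1 t.2 (⨆ u ∈ T, p u.1 u.2 z))
      = ⨆ t ∈ S, ⨆ u ∈ T, p t.1 t.2 (p u.1 u.2 z) := by
        simp only [map_biSup_of_map_sSup (hp _ _)]
    _ = ⨆ tu ∈ S ×ˢ T, p (p tu.1.1 tu.1.2 tu.2.1) tu.2.2 z := by
        simp only [biSup_prod, assoc]
    _ = supAction p (supActionMul p S T) z := by
        simp only [supAction, supActionMul, iSup_image]

end SupAction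

/-- under the associativity condition, `L` is closed under
composition in the quantale `Q(X)` of sup-preserving endomaps of `X`. -/
theorem lset_closed_under_comp {X Y : Type*} [CompleteLattice X] [CompleteLattice Y]
    (p : X → Y → X → X) (hp : TriSupPreserving p)
    (assoc : ∀ (x₁ x₂ x₃ : X) (y₁ y₂ : Y),
      p (p x₁ y₁ x₂) y₂ x₃ = p x₁ y₁ (p x₂ y₂ x₃)) :
    ∀ f ∈ Lset p, ∀ g ∈ Lset p, (f ∘ g) ∈ Lset p := by
  rintro _ ⟨S, rfl⟩ _ ⟨T, rfl⟩
  exact ⟨supActionMul p S T, supAction_comp hp.2.2 assoc S T⟩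
end

section
/- Let X and Y be complete lattices, and let p : X ⊗ Y ⊗ X → X and q : Y ⊗ X ⊗ Y → Y be surjective sup-preserving maps satisfying: (1) p(p(x₁⊗y₁⊗x₂)⊗y₂⊗x₃) = p(x₁⊗q(y₁⊗x₂⊗y₂)⊗x₃) = p(x₁⊗y₁⊗p(x₂⊗y₂⊗x₃)); (2) the symmetric identities for q; (3) p(−⊗x₁) = p(−⊗x₂) implies x₁ = x₂. Then the quantale L = {L_a : a ∈ X⊗Y} ⊆ Q(X), where L_a(x) = p(a⊗x), is essential: every element of L is a join of products of pairs of elements of L. -/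
/-!
Writing `x = ⋁ p(u₁ ⊗ v ⊗ u₂)` by surjectivity of `p`, associativity (1) and join-preservation of
`p` in its first argument give `L_{x⊗y} = ⋁ L_{u₁⊗v} ∘ L_{u₂⊗y}`; joining over the simple tensors
of `a` then exhibits `L_a` as a join of products.
-/

theorem TriSupPreserving.map_biSup_left {α β γ δ ι : Type*} [CompleteLattice α]
    [CompleteLattice β] [CompleteLattice γ] [CompleteLattice δ] {p : α → β → γ → δ}
    (hp : TriSupPreserving p) (s : Set ι) (g : ι → α) (y : β) (z : γ) :
    p (⨆ i ∈ s, g i) y z = ⨆ i ∈ s, p (g i) y z := by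
  rw [← sSup_image, hp.1, iSup_image]

section

variable {X Y : Type*} [CompleteLattice X] [CompleteLattice Y] {p : X → Y → X → X}

theorem mem_Lset_simple (x : X) (y : Y) : p x y ∈ Lset p :=
  ⟨{(x, y)}, by simp⟩

theorem apply_eq_biSup_comp (hp : TriSupPreserving p)
    (hassoc : ∀ (x₁ x₂ x₃ : X) (y₁ y₂ : Y), p (p x₁ y₁ x₂) y₂ x₃ = p x₁ y₁ (p x₂ y₂ x₃))
    {x : X} {S : Set (X × Y × X)} (hx : x = ⨆ u ∈ S, p u.1 u.2.1 u.2.2) (y : Y) (z : X) :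
    p x y z = ⨆ u ∈ S, p u.1 u.2.1 (p u.2.2 y z) := by
  rw [hx, hp.map_biSup_left]
  exact iSup_congr fun u => iSup_congr fun _ => hassoc _ _ _ _ _

end

theorem lset_essential_general {X Y : Type*} [CompleteLattice X] [CompleteLattice Y]
    (p : X → Y → X → X)
    (hp : TriSupPreserving p)
    -- surjectivity of the induced maps on tensor products:
    (psurj : ∀ x : X, ∃ S : Set (X × Y × X), x = ⨆ t ∈ S, p t.1 t.2.1 t.2.2)
    -- condition (1):
    (c1b : ∀ (x₁ x₂ x₃ : X) (y₁ y₂ : Y),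
      p (p x₁ y₁ x₂) y₂ x₃ = p x₁ y₁ (p x₂ y₂ x₃)) :
    ∀ f ∈ Lset p, ∃ T : Set ((X → X) × (X → X)),
      (∀ t ∈ T, t.1 ∈ Lset p ∧ t.2 ∈ Lset p) ∧
      f = fun z => ⨆ t ∈ T, t.1 (t.2 z) := by
  rintro _ ⟨S, rfl⟩
  choose R hR using psurj
  refine ⟨⋃ t ∈ S, (fun u => (p u.1 u.2.1, p u.2.2 t.2)) '' R t.1, ?_, ?_⟩
  · simp only [Set.mem_iUnion, Set.mem_image]
    rintro _ ⟨t, -, u, -, rfl⟩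
    exact ⟨mem_Lset_simple _ _, mem_Lset_simple _ _⟩
  · funext z
    simp only [iSup_iUnion, iSup_image]
    exact iSup_congr fun t => iSup_congr fun _ => apply_eq_biSup_comp hp c1b (hR t.1) t.2 z

/-- under conditions (1), (2), (3) and surjectivity, the quantale
`L` is essential: every element of `L` is a join of products (compositions) of
pairs of elements of `L`. -/
theorem lset_essential {X Y : Type*} [CompleteLattice X] [CompleteLattice Y]
    (p : X → Y → X → X) (q : Y → X → Y → Y)
    (hp : TriSupPreserving p) (hq : TriSupPreserving q)
    -- surjectivity of the induced maps on tensor products: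
    (psurj : ∀ x : X, ∃ S : Set (X × Y × X), x = ⨆ t ∈ S, p t.1 t.2.1 t.2.2)
    (qsurj : ∀ y : Y, ∃ S : Set (Y × X × Y), y = ⨆ t ∈ S, q t.1 t.2.1 t.2.2)
    -- condition (1):
    (c1a : ∀ (x₁ x₂ x₃ : X) (y₁ y₂ : Y),
      p (p x₁ y₁ x₂) y₂ x₃ = p x₁ (q y₁ x₂ y₂) x₃)
    (c1b : ∀ (x₁ x₂ x₃ : X) (y₁ y₂ : Y),
      p (p x₁ y₁ x₂) y₂ x₃ = p x₁ y₁ (p x₂ y₂ x₃))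
    -- condition (2):
    (c2a : ∀ (y₁ y₂ y₃ : Y) (x₁ x₂ : X),
      q (q y₁ x₁ y₂) x₂ y₃ = q y₁ (p x₁ y₂ x₂) y₃)
    (c2b : ∀ (y₁ y₂ y₃ : Y) (x₁ x₂ : X),
      q (q y₁ x₁ y₂) x₂ y₃ = q y₁ x₁ (q y₂ x₂ y₃))
    -- condition (3): `p(−⊗x₁) = p(−⊗x₂)` implies `x₁ = x₂`:
    (c3 : ∀ x₁ x₂ : X, (∀ (x : X) (y : Y), p x y x₁ = p x y x₂) → x₁ = x₂) :
    ∀ f ∈ Lset p, ∃ T : Set ((X → X) × (X → X)),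
      (∀ t ∈ T, t.1 ∈ Lset p ∧ t.2 ∈ Lset p) ∧
      f = fun z => ⨆ t ∈ T, t.1 (t.2 z) :=
  lset_essential_general p hp psurj c1b
end

section
/- Let X and Y be complete lattices, and let p : X ⊗ Y ⊗ X → X be a surjective sup-preserving map. Let L = {L_a : a ∈ X⊗Y} with L_a(x) = p(a⊗x). If a, b ∈ X⊗Y satisfy L_a ∘ L_{x⊗y} = L_b ∘ L_{x⊗y} for all x ∈ X and y ∈ Y, then L_a = L_b. (Here L_a ∘ L_{x⊗y}(z) uses the associativity identity p(a ⊗ p(x⊗y⊗z)) = L_a(p(x⊗y⊗z)).) -/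
section LeftAction

variable {α β γ δ : Type*} [CompleteLattice γ] [CompleteLattice δ]

/-- The action `z ↦ p (a ⊗ z)` of the element `a = ⨆ t ∈ S, t.1 ⊗ t.2` of `α ⊗ β`. -/
def leftAction (p : α → β → γ → δ) (S : Set (α × β)) (z : γ) : δ :=
  ⨆ t ∈ S, p t.1 t.2 z

variable {p : α → β → γ → δ}

theorem leftAction_biSup (hp : ∀ (x : α) (y : β) (S : Set γ), p x y (sSup S) = ⨆ z ∈ S, p x y z)
    (S : Set (α × β)) {ι : Type*} (T : Set ι) (g : ι → γ) :
    leftAction p S (⨆ i ∈ T, g i) = ⨆ i ∈ T, leftAction p S (g i) := by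
  have hp' (x : α) (y : β) : p x y (⨆ i ∈ T, g i) = ⨆ i ∈ T, p x y (g i) := by
    rw [← sSup_image, hp, iSup_image]
  simp only [leftAction, hp']
  exact iSup₂_comm _

theorem leftAction_eq_of_eq_on_generators
    (hp : ∀ (x : α) (y : β) (S : Set γ), p x y (sSup S) = ⨆ z ∈ S, p x y z)
    {ι : Type*} (g : ι → γ) (hg : ∀ z : γ, ∃ T : Set ι, z = ⨆ i ∈ T, g i)
    {Sa Sb : Set (α × β)} (h : ∀ i, leftAction p Sa (g i) = leftAction p Sb (g i)) :
    leftAction p Sa = leftAction p Sb := by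
  funext z
  obtain ⟨T, rfl⟩ := hg z
  simp only [leftAction_biSup hp, h]

end LeftAction

/-- if `p` is surjective and `L_a ∘ L_{x⊗y} = L_b ∘ L_{x⊗y}`
for all `x ∈ X`, `y ∈ Y`, then `L_a = L_b`.  Here `a, b ∈ X ⊗ Y` are
represented by sets `Sa, Sb` of simple tensors, `L_a(z) = p(a ⊗ z)`. -/
theorem left_operator_ext {X Y : Type*} [CompleteLattice X] [CompleteLattice Y]
    (p : X → Y → X → X) (hp : TriSupPreserving p)
    -- surjectivity of the induced map `X ⊗ Y ⊗ X → X`: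
    (psurj : ∀ x : X, ∃ S : Set (X × Y × X), x = ⨆ t ∈ S, p t.1 t.2.1 t.2.2)
    (Sa Sb : Set (X × Y))
    -- `L_a ∘ L_{x⊗y} = L_b ∘ L_{x⊗y}` for all `x, y`:
    (h : ∀ (x : X) (y : Y) (z : X),
      (⨆ t ∈ Sa, p t.1 t.2 (p x y z)) = ⨆ t ∈ Sb, p t.1 t.2 (p x y z)) :
    (fun z => ⨆ t ∈ Sa, p t.1 t.2 z) = fun z => ⨆ t ∈ Sb, p t.1 t.2 z :=
  leftAction_eq_of_eq_on_generators hp.2.2 (fun s : X × Y × X => p s.1 s.2.1 s.2.2) psurj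
    fun s => h s.1 s.2.1 s.2.2
end

section
/- Let X and Y be complete lattices and suppose there exist surjective sup-preserving maps p : X⊗Y⊗X → X and q : Y⊗X⊗Y → Y satisfying conditions (1)-(6): (1) p(p(x₁⊗y₁⊗x₂)⊗y₂⊗x₃) = p(x₁⊗q(y₁⊗x₂⊗y₂)⊗x₃) = p(x₁⊗y₁⊗p(x₂⊗y₂⊗x₃)); (2) q(q(y₁⊗x₁⊗y₂)⊗x₂⊗y₃) = q(y₁⊗p(x₁⊗y₂⊗x₂)⊗y₃) = q(y₁⊗x₁⊗q(y₂⊗x₂⊗y₃)); (3) p(−⊗x₁)=p(−⊗x₂) ⟹ x₁=x₂; (4) p(x₁⊗−)=p(x₂⊗−) ⟹ x₁=x₂; (5) q(−⊗y₁)=q(−⊗y₂) ⟹ y₁=y₂; (6) q(y₁⊗−)=q(y₂⊗−) ⟹ y₁=y₂. Then there exist m-regular quantales A, B such that (X,Y) is a Morita equivalence pair between A and B; in particular one may take A = {L_a : a ∈ X⊗Y} ⊆ Q(X) and B = {R_b : b ∈ Y⊗X} ⊆ Q(Y). -/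
universe u

/-- The data of a Morita context between quantales `A` and `B` with
equivalence bimodules `X` and `Y`: multiplications, module actions and
pairings. -/
structure MoritaData (A B X Y : Type u) [CompleteLattice A] [CompleteLattice B]
    [CompleteLattice X] [CompleteLattice Y] where
  /-- multiplication of the quantale `A` -/
  mulA : A → A → A
  /-- multiplication of the quantale `B` -/
  mulB : B → B → B
  /-- left action of `A` on `X` -/
  actAX : A → X → X
  /-- right action of `B` on `X` -/
  actXB : X → B → X
  /-- left action of `B` on `Y` -/
  actBY : B → Y → Y
  /-- right action of `A` on `Y` -/
  actYA : Y → A → Y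
  /-- the pairing `(−,−) : X × Y → A` -/
  prA : X → Y → A
  /-- the pairing `[−,−] : Y × X → B` -/
  prB : Y → X → B

/-- The axioms of a Morita context between m-regular quantales. -/
structure IsMoritaContext {A B X Y : Type u} [CompleteLattice A] [CompleteLattice B]
    [CompleteLattice X] [CompleteLattice Y] (d : MoritaData A B X Y) : Prop where
  -- `A` and `B` are quantales:
  mulA_assoc : ∀ a b c, d.mulA (d.mulA a b) c = d.mulA a (d.mulA b c)
  sSup_mulA : ∀ (S : Set A) (a : A), d.mulA (sSup S) a = ⨆ b ∈ S, d.mulA b a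
  mulA_sSup : ∀ (a : A) (S : Set A), d.mulA a (sSup S) = ⨆ b ∈ S, d.mulA a b
  mulB_assoc : ∀ a b c, d.mulB (d.mulB a b) c = d.mulB a (d.mulB b c)
  sSup_mulB : ∀ (S : Set B) (b : B), d.mulB (sSup S) b = ⨆ c ∈ S, d.mulB c b
  mulB_sSup : ∀ (b : B) (S : Set B), d.mulB b (sSup S) = ⨆ c ∈ S, d.mulB b c
  -- `A` and `B` are m-regular:
  essA : ∀ a : A, ∃ S : Set (A × A), a = ⨆ t ∈ S, d.mulA t.1 t.2
  lsepA : ∀ a b : A, (∀ x, d.mulA a x = d.mulA b x) → a = b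
  rsepA : ∀ a b : A, (∀ x, d.mulA x a = d.mulA x b) → a = b
  essB : ∀ b : B, ∃ S : Set (B × B), b = ⨆ t ∈ S, d.mulB t.1 t.2
  lsepB : ∀ a b : B, (∀ x, d.mulB a x = d.mulB b x) → a = b
  rsepB : ∀ a b : B, (∀ x, d.mulB x a = d.mulB x b) → a = b
  -- `X` is an `A,B`-bimodule:
  actAX_mul : ∀ a a' x, d.actAX (d.mulA a a') x = d.actAX a (d.actAX a' x)
  sSup_actAX : ∀ (S : Set A) (x : X), d.actAX (sSup S) x = ⨆ a ∈ S, d.actAX a x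
  actAX_sSup : ∀ (a : A) (S : Set X), d.actAX a (sSup S) = ⨆ x ∈ S, d.actAX a x
  actXB_mul : ∀ x b b', d.actXB x (d.mulB b b') = d.actXB (d.actXB x b) b'
  sSup_actXB : ∀ (S : Set X) (b : B), d.actXB (sSup S) b = ⨆ x ∈ S, d.actXB x b
  actXB_sSup : ∀ (x : X) (S : Set B), d.actXB x (sSup S) = ⨆ b ∈ S, d.actXB x b
  commX : ∀ a x b, d.actXB (d.actAX a x) b = d.actAX a (d.actXB x b)
  -- `X` is m-regular:
  essXl : ∀ x : X, ∃ S : Set (A × X), x = ⨆ t ∈ S, d.actAX t.1 t.2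
  sepXl : ∀ x x' : X, (∀ a, d.actAX a x = d.actAX a x') → x = x'
  essXr : ∀ x : X, ∃ S : Set (X × B), x = ⨆ t ∈ S, d.actXB t.1 t.2
  sepXr : ∀ x x' : X, (∀ b, d.actXB x b = d.actXB x' b) → x = x'
  -- `Y` is a `B,A`-bimodule:
  actBY_mul : ∀ b b' y, d.actBY (d.mulB b b') y = d.actBY b (d.actBY b' y)
  sSup_actBY : ∀ (S : Set B) (y : Y), d.actBY (sSup S) y = ⨆ b ∈ S, d.actBY b y
  actBY_sSup : ∀ (b : B) (S : Set Y), d.actBY b (sSup S) = ⨆ y ∈ S, d.actBY b y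
  actYA_mul : ∀ y a a', d.actYA y (d.mulA a a') = d.actYA (d.actYA y a) a'
  sSup_actYA : ∀ (S : Set Y) (a : A), d.actYA (sSup S) a = ⨆ y ∈ S, d.actYA y a
  actYA_sSup : ∀ (y : Y) (S : Set A), d.actYA y (sSup S) = ⨆ a ∈ S, d.actYA y a
  commY : ∀ b y a, d.actYA (d.actBY b y) a = d.actBY b (d.actYA y a)
  -- `Y` is m-regular:
  essYl : ∀ y : Y, ∃ S : Set (B × Y), y = ⨆ t ∈ S, d.actBY t.1 t.2
  sepYl : ∀ y y' : Y, (∀ b, d.actBY b y = d.actBY b y') → y = y'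
  essYr : ∀ y : Y, ∃ S : Set (Y × A), y = ⨆ t ∈ S, d.actYA t.1 t.2
  sepYr : ∀ y y' : Y, (∀ a, d.actYA y a = d.actYA y' a) → y = y'
  -- the pairings are sup-preserving in each variable:
  sSup_prA : ∀ (S : Set X) (y : Y), d.prA (sSup S) y = ⨆ x ∈ S, d.prA x y
  prA_sSup : ∀ (x : X) (S : Set Y), d.prA x (sSup S) = ⨆ y ∈ S, d.prA x y
  sSup_prB : ∀ (S : Set Y) (x : X), d.prB (sSup S) x = ⨆ y ∈ S, d.prB y x
  prB_sSup : ∀ (y : Y) (S : Set X), d.prB y (sSup S) = ⨆ x ∈ S, d.prB y x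
  -- the pairings are bimodule maps:
  prA_actA : ∀ a x y, d.prA (d.actAX a x) y = d.mulA a (d.prA x y)
  prA_actY : ∀ x y a, d.prA x (d.actYA y a) = d.mulA (d.prA x y) a
  prB_actB : ∀ b y x, d.prB (d.actBY b y) x = d.mulB b (d.prB y x)
  prB_actX : ∀ y x b, d.prB y (d.actXB x b) = d.mulB (d.prB y x) b
  -- the pairings are balanced:
  prA_bal : ∀ x b y, d.prA (d.actXB x b) y = d.prA x (d.actBY b y)
  prB_bal : ∀ y a x, d.prB (d.actYA y a) x = d.prB y (d.actAX a x)
  -- the linking identities: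
  link₁ : ∀ x₁ y x₂, d.actAX (d.prA x₁ y) x₂ = d.actXB x₁ (d.prB y x₂)
  link₂ : ∀ y₁ x y₂, d.actBY (d.prB y₁ x) y₂ = d.actYA y₁ (d.prA x y₂)
  -- the induced maps `X ⊗ Y → A` and `Y ⊗ X → B` are surjective:
  surjA : ∀ a : A, ∃ S : Set (X × Y), a = ⨆ t ∈ S, d.prA t.1 t.2
  surjB : ∀ b : B, ∃ S : Set (Y × X), b = ⨆ t ∈ S, d.prB t.1 t.2

/-!
Take for `A` the maps `L_a = p(a ⊗ −) : X → X` with `a ∈ X ⊗ Y`, composed as functions and acting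
on `X` by evaluation, and for `B` the maps `q(b ⊗ −) : Y → Y` with `b ∈ Y ⊗ X`; the pairings are
`(x, y) = L_{x ⊗ y}` and `[y, x] = q(y ⊗ x ⊗ −)`, and `x · q(y ⊗ x' ⊗ −) = p(x ⊗ y ⊗ x')`.
The first equation of (1) says `p(x · g ⊗ y ⊗ z) = p(x ⊗ g y ⊗ z)`, so by (4) an element `x · g` is
determined by `x` and `g` alone. With this, the associativity laws (1) and (2) yield the bimodule
axioms, balancedness and the linking identities; surjectivity of `p` and `q` yields `A · A = A`,
`B · B = B` and the essentiality of `X` and `Y`; and (3)-(6) are exactly the separation properties.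
-/

open Set

section JoinsOfValues

variable {α β δ : Type*} [CompleteLattice δ] {m : α → β → δ}

lemma exists_eq_biSup_of_biSup {ι : Type*} (I : Set ι) (b : ι → δ)
    (hb : ∀ i ∈ I, ∃ S : Set (α × β), b i = ⨆ t ∈ S, m t.1 t.2) :
    ∃ S : Set (α × β), ⨆ i ∈ I, b i = ⨆ t ∈ S, m t.1 t.2 := by
  choose! S hS using hb
  refine ⟨⋃ i ∈ I, S i, ?_⟩
  simp only [iSup_iUnion]
  exact iSup_congr fun i => iSup_congr (hS i)

lemma exists_eq_biSup_singleton (x : α) (y : β) :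
    ∃ S : Set (α × β), m x y = ⨆ t ∈ S, m t.1 t.2 :=
  ⟨{(x, y)}, by rw [iSup_singleton]⟩

end JoinsOfValues

namespace TriSupPreserving

variable {α β γ δ : Type*} [CompleteLattice α] [CompleteLattice β] [CompleteLattice γ]
  [CompleteLattice δ] {p : α → β → γ → δ} {ι : Sort*}

lemma map_iSup_left (hp : TriSupPreserving p) (u : ι → α) (y : β) (z : γ) :
    p (⨆ i, u i) y z = ⨆ i, p (u i) y z := by
  rw [iSup, hp.1, iSup_range]

lemma map_iSup_mid (hp : TriSupPreserving p) (x : α) (u : ι → β) (z : γ) :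
    p x (⨆ i, u i) z = ⨆ i, p x (u i) z := by
  rw [iSup, hp.2.1, iSup_range]

lemma map_iSup_right (hp : TriSupPreserving p) (x : α) (y : β) (u : ι → γ) :
    p x y (⨆ i, u i) = ⨆ i, p x y (u i) := by
  rw [iSup, hp.2.2, iSup_range]

end TriSupPreserving

section

variable {X Y : Type u} [CompleteLattice X]

/-- `leftMap p S` is `L_a` for `a = ⨆_{(x, y) ∈ S} x ⊗ y`. -/
def leftMap (p : X → Y → X → X) (S : Set (X × Y)) (z : X) : X :=
  ⨆ t ∈ S, p t.1 t.2 z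

def LeftQuantale (p : X → Y → X → X) : Type u := Set.range (leftMap p)

namespace LeftQuantale

variable {p : X → Y → X → X}

instance : CoeFun (LeftQuantale p) (fun _ => X → X) := ⟨Subtype.val⟩

@[ext] lemma ext {f g : LeftQuantale p} (h : ∀ z, f z = g z) : f = g :=
  Subtype.ext (funext h)

noncomputable def repr (f : LeftQuantale p) : Set (X × Y) := f.2.choose

lemma leftMap_repr (f : LeftQuantale p) : leftMap p f.repr = f := f.2.choose_spec

lemma apply_eq (f : LeftQuantale p) (z : X) : f z = ⨆ t ∈ f.repr, p t.1 t.2 z := by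
  rw [← leftMap_repr f]; rfl

def pairing (p : X → Y → X → X) (x : X) (y : Y) : LeftQuantale p :=
  ⟨p x y, {(x, y)}, funext fun _ => iSup_singleton⟩

@[simp] lemma pairing_apply (x : X) (y : Y) (z : X) : pairing p x y z = p x y z := rfl

instance : PartialOrder (LeftQuantale p) := Subtype.partialOrder _

instance : SupSet (LeftQuantale p) :=
  ⟨fun F => ⟨fun z => ⨆ f ∈ F, f z, ⋃ f ∈ F, repr f, by
    funext z
    simp only [leftMap, iSup_iUnion, ← apply_eq]⟩⟩

lemma sSup_apply (F : Set (LeftQuantale p)) (z : X) : sSup F z = ⨆ f ∈ F, f z := rfl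

instance : CompleteLattice (LeftQuantale p) :=
  completeLatticeOfSup _ fun F =>
    ⟨fun f hf z => le_iSup₂ (f := fun g (_ : g ∈ F) => g z) f hf,
     fun _ hg z => iSup₂_le fun _ hf => hg hf z⟩

lemma iSup_apply {ι : Sort*} (F : ι → LeftQuantale p) (z : X) :
    (⨆ i, F i) z = ⨆ i, F i z := by
  rw [iSup, sSup_apply, iSup_range]

lemma eq_biSup_pairing (f : LeftQuantale p) : f = ⨆ t ∈ f.repr, pairing p t.1 t.2 := by
  ext z
  simp only [iSup_apply, pairing_apply, apply_eq f]

/-- Composition, computed on representatives: by (1),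
`L_{x₁ ⊗ y₁} ∘ L_{x₂ ⊗ y₂} = L_{p(x₁ ⊗ y₁ ⊗ x₂) ⊗ y₂}` (see `mul_apply`). -/
noncomputable instance : Mul (LeftQuantale p) :=
  ⟨fun f g => ⟨_, image2 (fun s t => (p s.1 s.2 t.1, t.2)) f.repr g.repr, rfl⟩⟩

lemma exists_eq_biSup_apply
    (psurj : ∀ x : X, ∃ S : Set (X × Y × X), x = ⨆ t ∈ S, p t.1 t.2.1 t.2.2)
    (x : X) : ∃ S : Set (LeftQuantale p × X), x = ⨆ t ∈ S, t.1 t.2 := by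
  obtain ⟨S, rfl⟩ := psurj x
  exact exists_eq_biSup_of_biSup _ _ fun t _ =>
    exists_eq_biSup_singleton (m := fun (f : LeftQuantale p) z => f z) (pairing p t.1 t.2.1) t.2.2

lemma eq_of_apply_eq
    (hsep_right : ∀ x₁ x₂ : X, (∀ (x : X) (y : Y), p x y x₁ = p x y x₂) → x₁ = x₂)
    {x x' : X} (h : ∀ f : LeftQuantale p, f x = f x') : x = x' :=
  hsep_right _ _ fun a b => h (pairing p a b)

section

variable [CompleteLattice Y] (hp : TriSupPreserving p)
include hp

lemma apply_iSup (f : LeftQuantale p) {ι : Sort*} (u : ι → X) :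
    f (⨆ i, u i) = ⨆ i, f (u i) := by
  simp only [apply_eq f, hp.map_iSup_right, @iSup_comm _ ι]

lemma apply_sSup (f : LeftQuantale p) (U : Set X) : f (sSup U) = ⨆ z ∈ U, f z := by
  simp only [sSup_eq_iSup, apply_iSup hp]

lemma sSup_pairing (U : Set X) (y : Y) : pairing p (sSup U) y = ⨆ x ∈ U, pairing p x y := by
  ext z
  simp only [pairing_apply, iSup_apply, hp.1]

lemma pairing_sSup (x : X) (V : Set Y) : pairing p x (sSup V) = ⨆ y ∈ V, pairing p x y := by
  ext z
  simp only [pairing_apply, iSup_apply, hp.2.1]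

variable (hassoc : ∀ (x₁ x₂ x₃ : X) (y₁ y₂ : Y), p (p x₁ y₁ x₂) y₂ x₃ = p x₁ y₁ (p x₂ y₂ x₃))
include hassoc

lemma map_apply_left (f : LeftQuantale p) (x : X) (y : Y) (z : X) :
    f (p x y z) = p (f x) y z := by
  simp only [apply_eq f, hp.map_iSup_left, hassoc]

lemma mul_apply (f g : LeftQuantale p) (z : X) : (f * g) z = f (g z) := by
  show leftMap p _ z = _
  simp only [leftMap, iSup_image2, apply_eq g, apply_iSup hp, map_apply_left hp hassoc,
    apply_eq f, hp.map_iSup_left]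
  exact iSup₂_comm _

lemma mul_assoc (f g h : LeftQuantale p) : f * g * h = f * (g * h) := by
  ext z
  simp only [mul_apply hp hassoc]

lemma sSup_mul (F : Set (LeftQuantale p)) (g : LeftQuantale p) :
    sSup F * g = ⨆ f ∈ F, f * g := by
  ext z
  simp only [mul_apply hp hassoc, sSup_apply, iSup_apply]

lemma mul_sSup (f : LeftQuantale p) (G : Set (LeftQuantale p)) :
    f * sSup G = ⨆ g ∈ G, f * g := by
  ext z
  simp only [mul_apply hp hassoc, sSup_apply, iSup_apply, apply_iSup hp]

lemma pairing_apply_left (f : LeftQuantale p) (x : X) (y : Y) :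
    pairing p (f x) y = f * pairing p x y := by
  ext z
  rw [mul_apply hp hassoc, pairing_apply, pairing_apply, map_apply_left hp hassoc]

lemma pairing_eq_biSup_mul {x : X} {S : Set (X × Y × X)} (hx : x = ⨆ t ∈ S, p t.1 t.2.1 t.2.2)
    (y : Y) : pairing p x y = ⨆ t ∈ S, pairing p t.1 t.2.1 * pairing p t.2.2 y := by
  ext z
  simp only [hx, pairing_apply, iSup_apply, mul_apply hp hassoc, hp.map_iSup_left, hassoc]

lemma eq_of_mul_left_eq
    (hsep_right : ∀ x₁ x₂ : X, (∀ (x : X) (y : Y), p x y x₁ = p x y x₂) → x₁ = x₂)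
    {f g : LeftQuantale p} (h : ∀ u, u * f = u * g) : f = g := by
  ext x
  refine hsep_right _ _ fun x' y' => ?_
  simpa only [mul_apply hp hassoc, pairing_apply] using
    congrFun (congrArg Subtype.val (h (pairing p x' y'))) x

variable (psurj : ∀ x : X, ∃ S : Set (X × Y × X), x = ⨆ t ∈ S, p t.1 t.2.1 t.2.2)
include psurj

lemma exists_eq_biSup_mul (f : LeftQuantale p) :
    ∃ S : Set (LeftQuantale p × LeftQuantale p), f = ⨆ t ∈ S, t.1 * t.2 := by
  choose R hR using psurj
  rw [eq_biSup_pairing f]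
  refine exists_eq_biSup_of_biSup _ _ fun s _ => ?_
  rw [pairing_eq_biSup_mul hp hassoc (hR s.1)]
  exact exists_eq_biSup_of_biSup _ _ fun t _ => exists_eq_biSup_singleton _ _

lemma eq_of_mul_right_eq {f g : LeftQuantale p} (h : ∀ u, f * u = g * u) : f = g := by
  ext x
  obtain ⟨S, rfl⟩ := psurj x
  simp only [← pairing_apply, apply_iSup hp, ← mul_apply hp hassoc, h]

end

end LeftQuantale

open LeftQuantale

variable [CompleteLattice Y] {p : X → Y → X → X} {q : Y → X → Y → Y}

/-- The right action `x · g`, computed from a chosen representative of `g`; it does not depend on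
that choice by `apply_rightAct_left` and separation (4). -/
noncomputable def rightAct (p : X → Y → X → X) (x : X) (g : LeftQuantale q) : X :=
  ⨆ t ∈ g.repr, p x t.1 t.2

variable (hp : TriSupPreserving p)
include hp

lemma sSup_rightAct (U : Set X) (g : LeftQuantale q) :
    rightAct p (sSup U) g = ⨆ x ∈ U, rightAct p x g := by
  simp only [rightAct, sSup_eq_iSup, hp.map_iSup_left]
  exact iSup₂_comm _

variable (hmid : ∀ (x₁ x₂ x₃ : X) (y₁ y₂ : Y), p (p x₁ y₁ x₂) y₂ x₃ = p x₁ (q y₁ x₂ y₂) x₃)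
include hmid

lemma apply_rightAct_left (x : X) (g : LeftQuantale q) (y : Y) (z : X) :
    p (rightAct p x g) y z = p x (g y) z := by
  simp only [rightAct, apply_eq g, hp.map_iSup_left, hp.map_iSup_mid, hmid]

lemma pairing_rightAct_left (x : X) (g : LeftQuantale q) (y : Y) :
    pairing p (rightAct p x g) y = pairing p x (g y) := by
  ext z
  exact apply_rightAct_left hp hmid x g y z

lemma pairing_rightAct_mid
    (hassoc : ∀ (x₁ x₂ x₃ : X) (y₁ y₂ : Y), p (p x₁ y₁ x₂) y₂ x₃ = p x₁ y₁ (p x₂ y₂ x₃))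
    (x : X) (y : Y) (f : LeftQuantale p) :
    pairing p x (rightAct q y f) = pairing p x y * f := by
  ext z
  simp only [pairing_apply, mul_apply hp hassoc, rightAct, apply_eq f, hp.map_iSup_mid,
    hp.map_iSup_right, ← hmid, hassoc]

variable (hsep_left : ∀ x₁ x₂ : X, (∀ (y : Y) (x : X), p x₁ y x = p x₂ y x) → x₁ = x₂)
include hsep_left

lemma rightAct_pairing (x : X) (y : Y) (x' : X) : rightAct p x (pairing q y x') = p x y x' :=
  hsep_left _ _ fun y' z => by rw [apply_rightAct_left hp hmid, pairing_apply, hmid]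

lemma rightAct_sSup (x : X) (G : Set (LeftQuantale q)) :
    rightAct p x (sSup G) = ⨆ g ∈ G, rightAct p x g :=
  hsep_left _ _ fun y z => by
    simp only [apply_rightAct_left hp hmid, LeftQuantale.sSup_apply, hp.map_iSup_left,
      hp.map_iSup_mid]

lemma rightAct_apply
    (hassoc : ∀ (x₁ x₂ x₃ : X) (y₁ y₂ : Y), p (p x₁ y₁ x₂) y₂ x₃ = p x₁ y₁ (p x₂ y₂ x₃))
    (f : LeftQuantale p) (x : X) (g : LeftQuantale q) :
    rightAct p (f x) g = f (rightAct p x g) :=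
  hsep_left _ _ fun y z => by
    rw [apply_rightAct_left hp hmid, ← map_apply_left hp hassoc, ← map_apply_left hp hassoc,
      apply_rightAct_left hp hmid]

lemma rightAct_mul (hq : TriSupPreserving q)
    (hassoc : ∀ (y₁ y₂ y₃ : Y) (x₁ x₂ : X), q (q y₁ x₁ y₂) x₂ y₃ = q y₁ x₁ (q y₂ x₂ y₃))
    (x : X) (g g' : LeftQuantale q) : rightAct p x (g * g') = rightAct p (rightAct p x g) g' :=
  hsep_left _ _ fun y z => by simp only [apply_rightAct_left hp hmid, mul_apply hq hassoc]

lemma eq_of_rightAct_eq {x x' : X}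
    (h : ∀ g : LeftQuantale q, rightAct p x g = rightAct p x' g) : x = x' :=
  hsep_left _ _ fun y z => by
    rw [← rightAct_pairing hp hmid hsep_left, h, rightAct_pairing hp hmid hsep_left]

lemma exists_eq_biSup_rightAct
    (psurj : ∀ x : X, ∃ S : Set (X × Y × X), x = ⨆ t ∈ S, p t.1 t.2.1 t.2.2)
    (x : X) : ∃ S : Set (X × LeftQuantale q), x = ⨆ t ∈ S, rightAct p t.1 t.2 := by
  obtain ⟨S, rfl⟩ := psurj x
  refine exists_eq_biSup_of_biSup _ _ fun t _ => ?_
  rw [← rightAct_pairing hp hmid hsep_left]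
  exact exists_eq_biSup_singleton _ _

end

open LeftQuantale

/-- conditions (1)-(6) on surjective sup-preserving `p`, `q`
produce m-regular quantales `A`, `B` such that `(X,Y)` is a Morita
equivalence pair between `A` and `B`. -/
theorem morita_pair_of_conditions {X Y : Type u} [CompleteLattice X] [CompleteLattice Y]
    (p : X → Y → X → X) (q : Y → X → Y → Y)
    (hp : TriSupPreserving p) (hq : TriSupPreserving q)
    -- surjectivity:
    (psurj : ∀ x : X, ∃ S : Set (X × Y × X), x = ⨆ t ∈ S, p t.1 t.2.1 t.2.2)
    (qsurj : ∀ y : Y, ∃ S : Set (Y × X × Y), y = ⨆ t ∈ S, q t.1 t.2.1 t.2.2)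
    -- condition (1):
    (c1a : ∀ (x₁ x₂ x₃ : X) (y₁ y₂ : Y),
      p (p x₁ y₁ x₂) y₂ x₃ = p x₁ (q y₁ x₂ y₂) x₃)
    (c1b : ∀ (x₁ x₂ x₃ : X) (y₁ y₂ : Y),
      p (p x₁ y₁ x₂) y₂ x₃ = p x₁ y₁ (p x₂ y₂ x₃))
    -- condition (2):
    (c2a : ∀ (y₁ y₂ y₃ : Y) (x₁ x₂ : X),
      q (q y₁ x₁ y₂) x₂ y₃ = q y₁ (p x₁ y₂ x₂) y₃)
    (c2b : ∀ (y₁ y₂ y₃ : Y) (x₁ x₂ : X),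
      q (q y₁ x₁ y₂) x₂ y₃ = q y₁ x₁ (q y₂ x₂ y₃))
    -- conditions (3)-(6):
    (c3 : ∀ x₁ x₂ : X, (∀ (x : X) (y : Y), p x y x₁ = p x y x₂) → x₁ = x₂)
    (c4 : ∀ x₁ x₂ : X, (∀ (y : Y) (x : X), p x₁ y x = p x₂ y x) → x₁ = x₂)
    (c5 : ∀ y₁ y₂ : Y, (∀ (y : Y) (x : X), q y x y₁ = q y x y₂) → y₁ = y₂)
    (c6 : ∀ y₁ y₂ : Y, (∀ (x : X) (y : Y), q y₁ x y = q y₂ x y) → y₁ = y₂) :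
    ∃ (A : Type u) (iA : CompleteLattice A) (B : Type u) (iB : CompleteLattice B)
      (d : @MoritaData A B X Y iA iB _ _),
      @IsMoritaContext A B X Y iA iB _ _ d :=
  ⟨LeftQuantale p, inferInstance, LeftQuantale q, inferInstance,
    ⟨(· * ·), (· * ·), fun f x => f x, rightAct p, fun g y => g y, rightAct q,
      pairing p, pairing q⟩,
    { mulA_assoc := LeftQuantale.mul_assoc hp c1b
      sSup_mulA := LeftQuantale.sSup_mul hp c1b
      mulA_sSup := LeftQuantale.mul_sSup hp c1b
      mulB_assoc := LeftQuantale.mul_assoc hq c2b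
      sSup_mulB := LeftQuantale.sSup_mul hq c2b
      mulB_sSup := LeftQuantale.mul_sSup hq c2b
      essA := exists_eq_biSup_mul hp c1b psurj
      lsepA := fun _ _ => eq_of_mul_right_eq hp c1b psurj
      rsepA := fun _ _ => eq_of_mul_left_eq hp c1b c3
      essB := exists_eq_biSup_mul hq c2b qsurj
      lsepB := fun _ _ => eq_of_mul_right_eq hq c2b qsurj
      rsepB := fun _ _ => eq_of_mul_left_eq hq c2b c5
      actAX_mul := LeftQuantale.mul_apply hp c1b
      sSup_actAX := LeftQuantale.sSup_apply
      actAX_sSup := apply_sSup hp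
      actXB_mul := rightAct_mul hp c1a c4 hq c2b
      sSup_actXB := sSup_rightAct hp
      actXB_sSup := rightAct_sSup hp c1a c4
      commX := rightAct_apply hp c1a c4 c1b
      essXl := exists_eq_biSup_apply psurj
      sepXl := fun _ _ => eq_of_apply_eq c3
      essXr := exists_eq_biSup_rightAct hp c1a c4 psurj
      sepXr := fun _ _ => eq_of_rightAct_eq hp c1a c4
      actBY_mul := LeftQuantale.mul_apply hq c2b
      sSup_actBY := LeftQuantale.sSup_apply
      actBY_sSup := apply_sSup hq
      actYA_mul := rightAct_mul hq c2a c6 hp c1b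
      sSup_actYA := sSup_rightAct hq
      actYA_sSup := rightAct_sSup hq c2a c6
      commY := rightAct_apply hq c2a c6 c2b
      essYl := exists_eq_biSup_apply qsurj
      sepYl := fun _ _ => eq_of_apply_eq c5
      essYr := exists_eq_biSup_rightAct hq c2a c6 qsurj
      sepYr := fun _ _ => eq_of_rightAct_eq hq c2a c6
      sSup_prA := sSup_pairing hp
      prA_sSup := pairing_sSup hp
      sSup_prB := sSup_pairing hq
      prB_sSup := pairing_sSup hq
      prA_actA := pairing_apply_left hp c1b
      prA_actY := pairing_rightAct_mid hp c1a c1b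
      prB_actB := pairing_apply_left hq c2b
      prB_actX := pairing_rightAct_mid hq c2a c2b
      prA_bal := pairing_rightAct_left hp c1a
      prB_bal := pairing_rightAct_left hq c2a
      link₁ := fun x y x' => (rightAct_pairing hp c1a c4 x y x').symm
      link₂ := fun y x y' => (rightAct_pairing hq c2a c6 y x y').symm
      surjA := fun f => ⟨f.repr, eq_biSup_pairing f⟩
      surjB := fun g => ⟨g.repr, eq_biSup_pairing g⟩ }⟩
end

section
/- Let X be a complete lattice and p : X ⊗ X* ⊗ X → X a surjective sup-preserving map satisfying p(p(x₁⊗x₂*⊗x₃)⊗x₄*⊗x₅) = p(x₁⊗p(x₄⊗x₃*⊗x₂)*⊗x₅) = p(x₁⊗x₂*⊗p(x₃⊗x₄*⊗x₅)) for all xᵢ ∈ X, together with the separation conditions p(−⊗x₁)=p(−⊗x₂) ⟹ x₁=x₂ and p(x₁⊗−)=p(x₂⊗−) ⟹ x₁=x₂. Define q : X*⊗X⊗X* → X* by q(x*⊗y⊗z*) = p(z⊗y*⊗x)*. Then the pair (p,q) satisfies all six conditions of the Morita pair characterization: the two associativity families for p and q, and the four separation conditions. -/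
theorem ternary_assoc_right_eq_mid {X : Type*} (p : X → X → X → X)
    (ha1 : ∀ x₁ x₂ x₃ x₄ x₅ : X, p (p x₁ x₂ x₃) x₄ x₅ = p x₁ (p x₄ x₃ x₂) x₅)
    (ha2 : ∀ x₁ x₂ x₃ x₄ x₅ : X, p (p x₁ x₂ x₃) x₄ x₅ = p x₁ x₂ (p x₃ x₄ x₅))
    (x₁ x₂ x₃ x₄ x₅ : X) : p x₁ x₂ (p x₃ x₄ x₅) = p x₁ (p x₄ x₃ x₂) x₅ := by
  rw [← ha2, ha1]

theorem involutive_pair_conditions_general {X : Type*}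
    (p : X → X → X → X)
    -- condition a):
    (ha1 : ∀ x₁ x₂ x₃ x₄ x₅ : X,
      p (p x₁ x₂ x₃) x₄ x₅ = p x₁ (p x₄ x₃ x₂) x₅)
    (ha2 : ∀ x₁ x₂ x₃ x₄ x₅ : X,
      p (p x₁ x₂ x₃) x₄ x₅ = p x₁ x₂ (p x₃ x₄ x₅))
    -- condition b):
    (hb : ∀ x₁ x₂ : X, (∀ x y : X, p x y x₁ = p x y x₂) → x₁ = x₂)
    -- condition c):
    (hc : ∀ x₁ x₂ : X, (∀ y x : X, p x₁ y x = p x₂ y x) → x₁ = x₂) :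
    -- with `q (x, y, z) := p z y x`, the six conditions hold:
    -- condition (1):
    (∀ x₁ x₂ x₃ y₁ y₂ : X,
      p (p x₁ y₁ x₂) y₂ x₃ = p x₁ ((fun a b c => p c b a) y₁ x₂ y₂) x₃ ∧
      p (p x₁ y₁ x₂) y₂ x₃ = p x₁ y₁ (p x₂ y₂ x₃)) ∧
    -- condition (2):
    (∀ y₁ y₂ y₃ x₁ x₂ : X,
      (fun a b c => p c b a) ((fun a b c => p c b a) y₁ x₁ y₂) x₂ y₃ =
        (fun a b c => p c b a) y₁ (p x₁ y₂ x₂) y₃ ∧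
      (fun a b c => p c b a) ((fun a b c => p c b a) y₁ x₁ y₂) x₂ y₃ =
        (fun a b c => p c b a) y₁ x₁ ((fun a b c => p c b a) y₂ x₂ y₃)) ∧
    -- condition (3):
    (∀ x₁ x₂ : X, (∀ x y : X, p x y x₁ = p x y x₂) → x₁ = x₂) ∧
    -- condition (4):
    (∀ x₁ x₂ : X, (∀ y x : X, p x₁ y x = p x₂ y x) → x₁ = x₂) ∧
    -- condition (5):
    (∀ y₁ y₂ : X,
      (∀ y x : X, (fun a b c => p c b a) y x y₁ = (fun a b c => p c b a) y x y₂) →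
      y₁ = y₂) ∧
    -- condition (6):
    (∀ y₁ y₂ : X,
      (∀ x y : X, (fun a b c => p c b a) y₁ x y = (fun a b c => p c b a) y₂ x y) →
      y₁ = y₂) := by
  refine ⟨fun x₁ x₂ x₃ y₁ y₂ => ⟨ha1 .., ha2 ..⟩,
    fun y₁ y₂ y₃ x₁ x₂ => ⟨?_, (ha2 ..).symm⟩, hb, hc,
    fun y₁ y₂ h => hc y₁ y₂ fun y x => h x y,
    fun y₁ y₂ h => hb y₁ y₂ fun x y => h y x⟩
  exact ternary_assoc_right_eq_mid p ha1 ha2 ..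

/-- for `p : X ⊗ X* ⊗ X → X` (with `X* = X` via the identity
conjugation) satisfying condition a) and the separation conditions b), c),
the map `q(x*⊗y⊗z*) = p(z⊗y*⊗x)*` together with `p` satisfies all six
conditions of the Morita pair characterization. -/
theorem involutive_pair_conditions {X : Type*} [CompleteLattice X]
    (p : X → X → X → X) (hp : TriSupPreserving p)
    -- `p` is surjective:
    (psurj : ∀ x : X, ∃ S : Set (X × X × X), x = ⨆ t ∈ S, p t.1 t.2.1 t.2.2)
    -- condition a):
    (ha1 : ∀ x₁ x₂ x₃ x₄ x₅ : X,
      p (p x₁ x₂ x₃) x₄ x₅ = p x₁ (p x₄ x₃ x₂) x₅)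
    (ha2 : ∀ x₁ x₂ x₃ x₄ x₅ : X,
      p (p x₁ x₂ x₃) x₄ x₅ = p x₁ x₂ (p x₃ x₄ x₅))
    -- condition b):
    (hb : ∀ x₁ x₂ : X, (∀ x y : X, p x y x₁ = p x y x₂) → x₁ = x₂)
    -- condition c):
    (hc : ∀ x₁ x₂ : X, (∀ y x : X, p x₁ y x = p x₂ y x) → x₁ = x₂) :
    -- with `q (x, y, z) := p z y x`, the six conditions hold:
    -- condition (1):
    (∀ x₁ x₂ x₃ y₁ y₂ : X,
      p (p x₁ y₁ x₂) y₂ x₃ = p x₁ ((fun a b c => p c b a) y₁ x₂ y₂) x₃ ∧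
      p (p x₁ y₁ x₂) y₂ x₃ = p x₁ y₁ (p x₂ y₂ x₃)) ∧
    -- condition (2):
    (∀ y₁ y₂ y₃ x₁ x₂ : X,
      (fun a b c => p c b a) ((fun a b c => p c b a) y₁ x₁ y₂) x₂ y₃ =
        (fun a b c => p c b a) y₁ (p x₁ y₂ x₂) y₃ ∧
      (fun a b c => p c b a) ((fun a b c => p c b a) y₁ x₁ y₂) x₂ y₃ =
        (fun a b c => p c b a) y₁ x₁ ((fun a b c => p c b a) y₂ x₂ y₃)) ∧
    -- condition (3):
    (∀ x₁ x₂ : X, (∀ x y : X, p x y x₁ = p x y x₂) → x₁ = x₂) ∧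
    -- condition (4):
    (∀ x₁ x₂ : X, (∀ y x : X, p x₁ y x = p x₂ y x) → x₁ = x₂) ∧
    -- condition (5):
    (∀ y₁ y₂ : X,
      (∀ y x : X, (fun a b c => p c b a) y x y₁ = (fun a b c => p c b a) y x y₂) →
      y₁ = y₂) ∧
    -- condition (6):
    (∀ y₁ y₂ : X,
      (∀ x y : X, (fun a b c => p c b a) y₁ x y = (fun a b c => p c b a) y₂ x y) →
      y₁ = y₂) :=
  involutive_pair_conditions_general p ha1 ha2 hb hc
end

section
/- Let A and B be m-regular involutive quantales and X an imprimitivity bimodule between A and B, with inner products _A⟨−,−⟩ : X×X → A and ⟨−,−⟩_B : X×X → B satisfying _A⟨x,y⟩·z = x·⟨y,z⟩_B. Define pairings (−,−) : X × X* → A and [−,−] : X* × X → B by (x, y*) = _A⟨x,y⟩ and [x*, y] = ⟨x,y⟩_B. Then (A, B, X, X*, (−,−), [−,−]) is a Morita context; in particular A and B are Morita equivalent. -/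
/-!
The conjugate `X*` is an m-regular `B,A`-bimodule because the involutions are sup-preserving
anti-automorphisms, and the pairings inherit their linearity from the inner products. The real
content is balancedness. Fullness of `_A⟨−,−⟩` and separation of `A` make the action of `A`
on `X` faithful, and by compatibility both `(x·b, y*)` and `(x, b·y*)` act on `X` as
`z ↦ x·b·⟨y,z⟩_B`. The `B`-side is the same argument run in the opposite quantales.
-/

universe u

theorem exists_eq_biSup_reindex {α ι κ : Type*} [CompleteLattice α]
    {f : ι → α} {g : κ → α} (e : ι → κ) (he : ∀ i, g (e i) = f i) {c : α} :
    (∃ S : Set ι, c = ⨆ i ∈ S, f i) → ∃ S : Set κ, c = ⨆ k ∈ S, g k := by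
  rintro ⟨S, rfl⟩
  exact ⟨e '' S, by simp only [iSup_image, he]⟩

theorem comp_sSup_eq_biSup {α β γ : Type*} [CompleteLattice α] [CompleteLattice β]
    [CompleteLattice γ] {f : β → γ} {g : α → β}
    (hf : ∀ S : Set β, f (sSup S) = ⨆ b ∈ S, f b)
    (hg : ∀ S : Set α, g (sSup S) = ⨆ a ∈ S, g a) (S : Set α) :
    f (g (sSup S)) = ⨆ a ∈ S, f (g a) := by
  rw [hg, ← sSup_image, hf, iSup_image]

section HilbertModule

variable {A B X : Type*} {mul : A → A → A} {star : A → A} {act : A → X → X} {ip : X → X → A}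

theorem ip_act_star_right (star_star : ∀ a, star (star a) = a)
    (star_mul : ∀ a b, star (mul a b) = mul (star b) (star a))
    (ip_act : ∀ a x y, ip (act a x) y = mul a (ip x y))
    (ip_star : ∀ x y, star (ip x y) = ip y x) (x y : X) (a : A) :
    ip x (act (star a) y) = mul (ip x y) a := by
  rw [← ip_star, ip_act, star_mul, ip_star, star_star]

theorem eq_of_forall_act_eq [CompleteLattice A]
    (mul_sSup : ∀ a (S : Set A), mul a (sSup S) = ⨆ b ∈ S, mul a b)
    (ip_act : ∀ a x y, ip (act a x) y = mul a (ip x y))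
    (ip_full : ∀ c : A, ∃ S : Set (X × X), c = ⨆ t ∈ S, ip t.1 t.2)
    (lsep : ∀ a b : A, (∀ c, mul a c = mul b c) → a = b)
    {a a' : A} (h : ∀ z, act a z = act a' z) : a = a' := by
  refine lsep a a' fun c => ?_
  obtain ⟨S, rfl⟩ := ip_full c
  have mul_iSup_ip : ∀ u, mul u (⨆ t ∈ S, ip t.1 t.2) = ⨆ t ∈ S, ip (act u t.1) t.2 := by
    intro u
    rw [← sSup_image, mul_sSup, iSup_image]
    simp only [ip_act]
  simp only [mul_iSup_ip, h]

theorem ip_act_right_eq_ip_act_star {mulB : B → B → B} {starB : B → B} {r : X → B → X}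
    {ipB : X → X → B}
    (act_faithful : ∀ a a' : A, (∀ z, act a z = act a' z) → a = a')
    (compat : ∀ x y z, act (ip x y) z = r x (ipB y z))
    (r_mul : ∀ x b b', r x (mulB b b') = r (r x b) b')
    (ipB_act_star : ∀ b y z, ipB (r y (starB b)) z = mulB b (ipB y z))
    (x : X) (b : B) (y : X) :
    ip (r x b) y = ip x (r y (starB b)) :=
  act_faithful _ _ fun z => by rw [compat, compat, ipB_act_star, r_mul]

end HilbertModule

/-- if `X` is an imprimitivity bimodule between m-regular
involutive quantales `A` and `B`, then with the pairings `(x, y*) = _A⟨x,y⟩`,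
`[x*, y] = ⟨x,y⟩_B` and the conjugate bimodule structure on `X* = X`,
the 6-tuple `(A, B, X, X*, (−,−), [−,−])` is a Morita context; in particular
`A` and `B` are Morita equivalent. -/
theorem morita_context_of_imprimitivity {A B X : Type u}
    [CompleteLattice A] [CompleteLattice B] [CompleteLattice X]
    (mulA : A → A → A) (starA : A → A) (mulB : B → B → B) (starB : B → B)
    (l : A → X → X) (r : X → B → X)
    (ipA : X → X → A) (ipB : X → X → B)
    -- `A` is an involutive quantale:
    (mulA_assoc : ∀ a b c, mulA (mulA a b) c = mulA a (mulA b c))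
    (sSup_mulA : ∀ (S : Set A) a, mulA (sSup S) a = ⨆ b ∈ S, mulA b a)
    (mulA_sSup : ∀ a (S : Set A), mulA a (sSup S) = ⨆ b ∈ S, mulA a b)
    (starA_starA : ∀ a, starA (starA a) = a)
    (starA_sSup : ∀ S : Set A, starA (sSup S) = ⨆ a ∈ S, starA a)
    (starA_mul : ∀ a b, starA (mulA a b) = mulA (starA b) (starA a))
    -- `B` is an involutive quantale:
    (mulB_assoc : ∀ a b c, mulB (mulB a b) c = mulB a (mulB b c))
    (sSup_mulB : ∀ (S : Set B) b, mulB (sSup S) b = ⨆ c ∈ S, mulB c b)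
    (mulB_sSup : ∀ b (S : Set B), mulB b (sSup S) = ⨆ c ∈ S, mulB b c)
    (starB_starB : ∀ b, starB (starB b) = b)
    (starB_sSup : ∀ S : Set B, starB (sSup S) = ⨆ b ∈ S, starB b)
    (starB_mul : ∀ a b, starB (mulB a b) = mulB (starB b) (starB a))
    -- `A` and `B` are m-regular:
    (essA : ∀ a : A, ∃ S : Set (A × A), a = ⨆ t ∈ S, mulA t.1 t.2)
    (lsepA : ∀ a b : A, (∀ x, mulA a x = mulA b x) → a = b)
    (rsepA : ∀ a b : A, (∀ x, mulA x a = mulA x b) → a = b)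
    (essB : ∀ b : B, ∃ S : Set (B × B), b = ⨆ t ∈ S, mulB t.1 t.2)
    (lsepB : ∀ a b : B, (∀ x, mulB a x = mulB b x) → a = b)
    (rsepB : ∀ a b : B, (∀ x, mulB x a = mulB x b) → a = b)
    -- `X` is an `A,B`-bimodule:
    (l_mul : ∀ a a' x, l (mulA a a') x = l a (l a' x))
    (sSup_l : ∀ (S : Set A) x, l (sSup S) x = ⨆ a ∈ S, l a x)
    (l_sSup : ∀ a (S : Set X), l a (sSup S) = ⨆ x ∈ S, l a x)
    (r_mul : ∀ x b b', r x (mulB b b') = r (r x b) b')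
    (sSup_r : ∀ (S : Set X) b, r (sSup S) b = ⨆ x ∈ S, r x b)
    (r_sSup : ∀ x (S : Set B), r x (sSup S) = ⨆ b ∈ S, r x b)
    (comm : ∀ a x b, r (l a x) b = l a (r x b))
    -- `X` is m-regular:
    (essXl : ∀ x : X, ∃ S : Set (A × X), x = ⨆ t ∈ S, l t.1 t.2)
    (sepXl : ∀ x x' : X, (∀ a, l a x = l a x') → x = x')
    (essXr : ∀ x : X, ∃ S : Set (X × B), x = ⨆ t ∈ S, r t.1 t.2)
    (sepXr : ∀ x x' : X, (∀ b, r x b = r x' b) → x = x')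
    -- `(A, X, _A⟨−,−⟩)` is a full Hilbert module:
    (sSup_ipA : ∀ (S : Set X) y, ipA (sSup S) y = ⨆ x ∈ S, ipA x y)
    (ipA_sSup : ∀ x (S : Set X), ipA x (sSup S) = ⨆ y ∈ S, ipA x y)
    (ipA_l : ∀ a x y, ipA (l a x) y = mulA a (ipA x y))
    (ipA_star : ∀ x y, starA (ipA x y) = ipA y x)
    (ipA_full : ∀ a : A, ∃ S : Set (X × X), a = ⨆ t ∈ S, ipA t.1 t.2)
    -- `(B, X, ⟨−,−⟩_B)` is a full Hilbert module:
    (sSup_ipB : ∀ (S : Set X) y, ipB (sSup S) y = ⨆ x ∈ S, ipB x y)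
    (ipB_sSup : ∀ x (S : Set X), ipB x (sSup S) = ⨆ y ∈ S, ipB x y)
    (ipB_r : ∀ x y b, ipB x (r y b) = mulB (ipB x y) b)
    (ipB_star : ∀ x y, starB (ipB x y) = ipB y x)
    (ipB_full : ∀ b : B, ∃ S : Set (X × X), b = ⨆ t ∈ S, ipB t.1 t.2)
    -- the compatibility condition `_A⟨x,y⟩·z = x·⟨y,z⟩_B`:
    (compat : ∀ x y z, l (ipA x y) z = r x (ipB y z)) :
    -- conclusion: `(A, B, X, X*, (−,−), [−,−])` is a Morita context, where
    -- `X* = X`, `b·x* = (x·b*)*`, `x*·a = (a*·x)*`, `(x,y*) = _A⟨x,y⟩`,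
    -- `[x*,y] = ⟨x,y⟩_B`:
    IsMoritaContext
      (⟨mulA, mulB, l, r,
        fun b y => r y (starB b), fun y a => l (starA a) y,
        ipA, ipB⟩ : MoritaData A B X X) := by
  have ipA_l_star := ip_act_star_right starA_starA starA_mul ipA_l ipA_star
  -- The `B`-side facts are the `A`-side lemmas for `X` as a left module over `Bᵒᵖ`.
  have ipB_r_star : ∀ b y x, ipB (r y (starB b)) x = mulB b (ipB y x) := fun b y x =>
    ip_act_star_right (mul := fun a b => mulB b a) (act := fun b x => r x b)
      (ip := fun x y => ipB y x) starB_starB (fun a b => starB_mul b a)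
      (fun b x y => ipB_r y x b) (fun x y => ipB_star y x) x y b
  have l_faithful : ∀ a a', (∀ z, l a z = l a' z) → a = a' := fun _ _ =>
    eq_of_forall_act_eq mulA_sSup ipA_l ipA_full lsepA
  have r_faithful : ∀ b b', (∀ z, r z b = r z b') → b = b' := fun _ _ =>
    eq_of_forall_act_eq (mul := fun a b => mulB b a) (act := fun b x => r x b)
      (ip := fun x y => ipB y x) (fun b S => sSup_mulB S b) (fun b x y => ipB_r y x b)
      (fun c => exists_eq_biSup_reindex Prod.swap (fun _ => rfl) (ipB_full c)) rsepB
  exact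
    { mulA_assoc, sSup_mulA, mulA_sSup, mulB_assoc, sSup_mulB, mulB_sSup,
      essA, lsepA, rsepA, essB, lsepB, rsepB, essXl, sepXl, essXr, sepXr,
      actAX_mul := l_mul, sSup_actAX := sSup_l, actAX_sSup := l_sSup,
      actXB_mul := r_mul, sSup_actXB := sSup_r, actXB_sSup := r_sSup, commX := comm,
      actBY_mul := fun b b' y => by simp only [starB_mul, r_mul]
      sSup_actBY := fun S y => comp_sSup_eq_biSup (r_sSup y) starB_sSup S
      actBY_sSup := fun b S => sSup_r S (starB b)
      actYA_mul := fun y a a' => by simp only [starA_mul, l_mul]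
      sSup_actYA := fun S a => l_sSup (starA a) S
      actYA_sSup := fun y S => comp_sSup_eq_biSup (f := (l · y)) (sSup_l · y) starA_sSup S
      commY := fun b y a => (comm (starA a) y (starB b)).symm
      essYl := fun y => exists_eq_biSup_reindex (fun t => (starB t.2, t.1))
        (fun t => congrArg (r t.1) (starB_starB t.2)) (essXr y)
      sepYl := fun y y' h =>
        sepXr y y' ((Function.Involutive.surjective starB_starB).forall.2 h)
      essYr := fun y => exists_eq_biSup_reindex (fun t => (t.2, starA t.1))
        (fun t => congrArg (l · t.2) (starA_starA t.1)) (essXl y)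
      sepYr := fun y y' h =>
        sepXl y y' ((Function.Involutive.surjective starA_starA).forall.2 h)
      sSup_prA := sSup_ipA, prA_sSup := ipA_sSup, sSup_prB := sSup_ipB, prB_sSup := ipB_sSup
      prA_actA := ipA_l, prA_actY := ipA_l_star, prB_actB := ipB_r_star
      prB_actX := ipB_r
      prA_bal := ip_act_right_eq_ip_act_star l_faithful compat r_mul ipB_r_star
      prB_bal := fun y a x => (ip_act_right_eq_ip_act_star (mulB := fun a b => mulA b a)
        (r := fun x a => l a x) (ip := fun x y => ipB y x) (ipB := fun x y => ipA y x)
        r_faithful (fun x y z => (compat z y x).symm) (fun x a a' => l_mul a' a x)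
        (fun a y z => ipA_l_star z y a) x a y).symm
      link₁ := compat
      link₂ := fun y₁ x y₂ => by simp only [ipB_star, ipA_star, compat]
      surjA := ipA_full, surjB := ipB_full }
end

section
/- Let X and Y be complete lattices with surjective sup-preserving maps p : X⊗Y⊗X → X and q : Y⊗X⊗Y → Y satisfying conditions (1)-(6) of the Morita pair characterization. Let L = {L_a : a ∈ X⊗Y} and R = {R_b : b ∈ Y⊗X} with L_a(x) = p(a⊗x), R_b(y) = q(b⊗y). Then X becomes an L,R-bimodule via L_a · x = p(a⊗x) and x · R_b = p(x⊗b): the left and right actions each satisfy the module axioms and commute with each other. -/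
/-!
Everything reduces to the middle-linearity `p (p x y₁ x') y₂ z = p x (q y₁ x' y₂) z`
and the outer associativity `p (p x₁ y₁ x₂) y₂ x₃ = p x₁ y₁ (p x₂ y₂ x₃)` of condition (1),
pushed through joins by sup-preservation in each variable. Well-definedness of the right
action additionally needs right separation: two right actions `x ↦ ⨆ p x t.1 t.2` agree as
soon as `p (·) y z` agrees on them for all `y, z`, and by middle-linearity this only depends
on the operator `w ↦ ⨆ q t.1 t.2 w`.
-/

namespace TriSupPreserving

variable {α β γ δ ι : Type*} [CompleteLattice α] [CompleteLattice β]
    [CompleteLattice γ] [CompleteLattice δ] {p : α → β → γ → δ}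

theorem map_biSup_left_s12 (hp : TriSupPreserving p) (T : Set ι) (g : ι → α) (y : β) (z : γ) :
    p (⨆ i ∈ T, g i) y z = ⨆ i ∈ T, p (g i) y z := by
  rw [← sSup_image, hp.1, iSup_image]

theorem map_biSup_mid (hp : TriSupPreserving p) (T : Set ι) (g : ι → β) (x : α) (z : γ) :
    p x (⨆ i ∈ T, g i) z = ⨆ i ∈ T, p x (g i) z := by
  rw [← sSup_image, hp.2.1, iSup_image]

theorem map_biSup_right (hp : TriSupPreserving p) (T : Set ι) (g : ι → γ) (x : α) (y : β) :
    p x y (⨆ i ∈ T, g i) = ⨆ i ∈ T, p x y (g i) := by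
  rw [← sSup_image, hp.2.2, iSup_image]

end TriSupPreserving

section Bimodule

variable {X Y : Type*} [CompleteLattice X] [CompleteLattice Y]
    {p : X → Y → X → X} {q : Y → X → Y → Y}

theorem biSup_left_eq_mid_biSup (hp : TriSupPreserving p)
    (c1a : ∀ (x₁ x₂ x₃ : X) (y₁ y₂ : Y), p (p x₁ y₁ x₂) y₂ x₃ = p x₁ (q y₁ x₂ y₂) x₃)
    (x : X) (T : Set (Y × X)) (y : Y) (z : X) :
    p (⨆ t ∈ T, p x t.1 t.2) y z = p x (⨆ t ∈ T, q t.1 t.2 y) z := by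
  simp only [hp.map_biSup_left_s12, hp.map_biSup_mid, c1a]

theorem rightAction_congr (hp : TriSupPreserving p)
    (c1a : ∀ (x₁ x₂ x₃ : X) (y₁ y₂ : Y), p (p x₁ y₁ x₂) y₂ x₃ = p x₁ (q y₁ x₂ y₂) x₃)
    (c4 : ∀ x₁ x₂ : X, (∀ (y : Y) (x : X), p x₁ y x = p x₂ y x) → x₁ = x₂)
    {T T' : Set (Y × X)}
    (h : (fun w => ⨆ t ∈ T, q t.1 t.2 w) = fun w => ⨆ t ∈ T', q t.1 t.2 w) :
    (fun x => ⨆ t ∈ T, p x t.1 t.2) = fun x => ⨆ t ∈ T', p x t.1 t.2 := by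
  funext x
  refine c4 _ _ fun y z => ?_
  rw [biSup_left_eq_mid_biSup hp c1a, biSup_left_eq_mid_biSup hp c1a, congrFun h y]

theorem map_sSup_of_mem_Lset (hp : TriSupPreserving p) {f : X → X} (hf : f ∈ Lset p)
    (S : Set X) : f (sSup S) = ⨆ x ∈ S, f x := by
  obtain ⟨U, rfl⟩ := hf
  simp only [hp.2.2]
  exact iSup₂_comm _

theorem rightAction_assoc (hp : TriSupPreserving p)
    (c1a : ∀ (x₁ x₂ x₃ : X) (y₁ y₂ : Y), p (p x₁ y₁ x₂) y₂ x₃ = p x₁ (q y₁ x₂ y₂) x₃)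
    (x : X) (T T' : Set (Y × X)) :
    (⨆ s ∈ T', p (⨆ t ∈ T, p x t.1 t.2) s.1 s.2) =
      ⨆ u ∈ (fun ts : (Y × X) × (Y × X) => (q ts.1.1 ts.1.2 ts.2.1, ts.2.2)) '' (T ×ˢ T'),
        p x u.1 u.2 := by
  rw [iSup_image, biSup_prod]
  simp only [hp.map_biSup_left_s12, c1a]
  exact iSup₂_comm _

theorem rightAction_sSup (hp : TriSupPreserving p) (S : Set X) (T : Set (Y × X)) :
    (⨆ t ∈ T, p (sSup S) t.1 t.2) = ⨆ x ∈ S, ⨆ t ∈ T, p x t.1 t.2 := by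
  simp only [hp.1]
  exact iSup₂_comm _

theorem map_rightAction_of_mem_Lset (hp : TriSupPreserving p)
    (c1b : ∀ (x₁ x₂ x₃ : X) (y₁ y₂ : Y), p (p x₁ y₁ x₂) y₂ x₃ = p x₁ y₁ (p x₂ y₂ x₃))
    {f : X → X} (hf : f ∈ Lset p) (x : X) (T : Set (Y × X)) :
    f (⨆ t ∈ T, p x t.1 t.2) = ⨆ t ∈ T, p (f x) t.1 t.2 := by
  obtain ⟨U, rfl⟩ := hf
  simp only [hp.map_biSup_right, ← c1b, hp.map_biSup_left_s12]
  exact iSup₂_comm _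

end Bimodule

/-- Elements `a ∈ X⊗Y` are the operators in `Lset p`; elements `b ∈ Y⊗X` are represented by
sets `T : Set (Y × X)` of simple tensors, the operator `R_b` being `w ↦ ⨆ t ∈ T, q t.1 t.2 w`
and the right action `x ↦ ⨆ t ∈ T, p x t.1 t.2`. -/
theorem bimodule_structure_general {X Y : Type*} [CompleteLattice X] [CompleteLattice Y]
    (p : X → Y → X → X) (q : Y → X → Y → Y)
    (hp : TriSupPreserving p)
    (c1a : ∀ (x₁ x₂ x₃ : X) (y₁ y₂ : Y),
      p (p x₁ y₁ x₂) y₂ x₃ = p x₁ (q y₁ x₂ y₂) x₃)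
    (c1b : ∀ (x₁ x₂ x₃ : X) (y₁ y₂ : Y),
      p (p x₁ y₁ x₂) y₂ x₃ = p x₁ y₁ (p x₂ y₂ x₃))
    (c4 : ∀ x₁ x₂ : X, (∀ (y : Y) (x : X), p x₁ y x = p x₂ y x) → x₁ = x₂) :
    -- the right action `x · R_b` is well defined (depends only on the operator `R_b`):
    (∀ T T' : Set (Y × X),
      ((fun w => ⨆ t ∈ T, q t.1 t.2 w) = fun w => ⨆ t ∈ T', q t.1 t.2 w) →
      (fun x => ⨆ t ∈ T, p x t.1 t.2) = fun x => ⨆ t ∈ T', p x t.1 t.2) ∧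
    -- left action axioms: `(f·g)·x = f·(g·x)` for `f, g ∈ L` (multiplication
    -- in `L` is composition, the action is application),
    (∀ f ∈ Lset p, ∀ g ∈ Lset p, ∀ x : X, (f ∘ g) x = f (g x)) ∧
    -- the left action preserves joins in the module variable,
    (∀ f ∈ Lset p, ∀ S : Set X, f (sSup S) = ⨆ x ∈ S, f x) ∧
    -- and in the quantale variable (joins in `L` are pointwise),
    (∀ T : Set (X → X), T ⊆ Lset p → ∀ x : X,
      (fun z => ⨆ f ∈ T, f z) x = ⨆ f ∈ T, f x) ∧
    -- right action axiom: `(x·a)·b = x·(a·b)`, the product `R_a ∘ R_b` of the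
    -- operators represented by `T`, `T'` being represented by
    -- `{(q t₁ t₂ s₁, s₂) : (t₁,t₂) ∈ T, (s₁,s₂) ∈ T'}`:
    (∀ (x : X) (T T' : Set (Y × X)),
      (⨆ s ∈ T', p (⨆ t ∈ T, p x t.1 t.2) s.1 s.2) =
        ⨆ u ∈ (fun ts : (Y × X) × (Y × X) =>
          (q ts.1.1 ts.1.2 ts.2.1, ts.2.2)) '' (T ×ˢ T'), p x u.1 u.2) ∧
    -- the right action preserves joins in the module variable,
    (∀ (S : Set X) (T : Set (Y × X)),
      (⨆ t ∈ T, p (sSup S) t.1 t.2) = ⨆ x ∈ S, ⨆ t ∈ T, p x t.1 t.2) ∧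
    -- and in the quantale variable (a join in `R` is represented by the union
    -- of representing sets),
    (∀ (x : X) (𝒯 : Set (Set (Y × X))),
      (⨆ t ∈ ⋃₀ 𝒯, p x t.1 t.2) = ⨆ T ∈ 𝒯, ⨆ t ∈ T, p x t.1 t.2) ∧
    -- the left and right actions commute:
    (∀ f ∈ Lset p, ∀ (x : X) (T : Set (Y × X)),
      f (⨆ t ∈ T, p x t.1 t.2) = ⨆ t ∈ T, p (f x) t.1 t.2) :=
  ⟨fun _ _ => rightAction_congr hp c1a c4,
    fun _ _ _ _ _ => rfl,
    fun _ => map_sSup_of_mem_Lset hp,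
    fun _ _ _ => rfl,
    rightAction_assoc hp c1a,
    rightAction_sSup hp,
    fun x 𝒯 => iSup_sUnion 𝒯 fun t => p x t.1 t.2,
    fun _ => map_rightAction_of_mem_Lset hp c1b⟩

/-- under conditions (1)-(6), `X` becomes an `L,R`-bimodule via
`L_a · x = p(a⊗x)` and `x · R_b = p(x⊗b)`.  Elements `a ∈ X⊗Y` are the
operators in `Lset p`; elements `b ∈ Y⊗X` are represented by sets
`T : Set (Y × X)` of simple tensors, the operator `R_b` being
`w ↦ ⨆ t ∈ T, q t.1 t.2 w` and the right action `x ↦ ⨆ t ∈ T, p x t.1 t.2`. -/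
theorem bimodule_structure {X Y : Type*} [CompleteLattice X] [CompleteLattice Y]
    (p : X → Y → X → X) (q : Y → X → Y → Y)
    (hp : TriSupPreserving p) (hq : TriSupPreserving q)
    (psurj : ∀ x : X, ∃ S : Set (X × Y × X), x = ⨆ t ∈ S, p t.1 t.2.1 t.2.2)
    (qsurj : ∀ y : Y, ∃ S : Set (Y × X × Y), y = ⨆ t ∈ S, q t.1 t.2.1 t.2.2)
    (c1a : ∀ (x₁ x₂ x₃ : X) (y₁ y₂ : Y),
      p (p x₁ y₁ x₂) y₂ x₃ = p x₁ (q y₁ x₂ y₂) x₃)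
    (c1b : ∀ (x₁ x₂ x₃ : X) (y₁ y₂ : Y),
      p (p x₁ y₁ x₂) y₂ x₃ = p x₁ y₁ (p x₂ y₂ x₃))
    (c2a : ∀ (y₁ y₂ y₃ : Y) (x₁ x₂ : X),
      q (q y₁ x₁ y₂) x₂ y₃ = q y₁ (p x₁ y₂ x₂) y₃)
    (c2b : ∀ (y₁ y₂ y₃ : Y) (x₁ x₂ : X),
      q (q y₁ x₁ y₂) x₂ y₃ = q y₁ x₁ (q y₂ x₂ y₃))
    (c3 : ∀ x₁ x₂ : X, (∀ (x : X) (y : Y), p x y x₁ = p x y x₂) → x₁ = x₂)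
    (c4 : ∀ x₁ x₂ : X, (∀ (y : Y) (x : X), p x₁ y x = p x₂ y x) → x₁ = x₂)
    (c5 : ∀ y₁ y₂ : Y, (∀ (y : Y) (x : X), q y x y₁ = q y x y₂) → y₁ = y₂)
    (c6 : ∀ y₁ y₂ : Y, (∀ (x : X) (y : Y), q y₁ x y = q y₂ x y) → y₁ = y₂) :
    -- the right action `x · R_b` is well defined (depends only on the operator `R_b`):
    (∀ T T' : Set (Y × X),
      ((fun w => ⨆ t ∈ T, q t.1 t.2 w) = fun w => ⨆ t ∈ T', q t.1 t.2 w) →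
      (fun x => ⨆ t ∈ T, p x t.1 t.2) = fun x => ⨆ t ∈ T', p x t.1 t.2) ∧
    -- left action axioms: `(f·g)·x = f·(g·x)` for `f, g ∈ L` (multiplication
    -- in `L` is composition, the action is application),
    (∀ f ∈ Lset p, ∀ g ∈ Lset p, ∀ x : X, (f ∘ g) x = f (g x)) ∧
    -- the left action preserves joins in the module variable,
    (∀ f ∈ Lset p, ∀ S : Set X, f (sSup S) = ⨆ x ∈ S, f x) ∧
    -- and in the quantale variable (joins in `L` are pointwise),
    (∀ T : Set (X → X), T ⊆ Lset p → ∀ x : X,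
      (fun z => ⨆ f ∈ T, f z) x = ⨆ f ∈ T, f x) ∧
    -- right action axiom: `(x·a)·b = x·(a·b)`, the product `R_a ∘ R_b` of the
    -- operators represented by `T`, `T'` being represented by
    -- `{(q t₁ t₂ s₁, s₂) : (t₁,t₂) ∈ T, (s₁,s₂) ∈ T'}`:
    (∀ (x : X) (T T' : Set (Y × X)),
      (⨆ s ∈ T', p (⨆ t ∈ T, p x t.1 t.2) s.1 s.2) =
        ⨆ u ∈ (fun ts : (Y × X) × (Y × X) =>
          (q ts.1.1 ts.1.2 ts.2.1, ts.2.2)) '' (T ×ˢ T'), p x u.1 u.2) ∧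
    -- the right action preserves joins in the module variable,
    (∀ (S : Set X) (T : Set (Y × X)),
      (⨆ t ∈ T, p (sSup S) t.1 t.2) = ⨆ x ∈ S, ⨆ t ∈ T, p x t.1 t.2) ∧
    -- and in the quantale variable (a join in `R` is represented by the union
    -- of representing sets),
    (∀ (x : X) (𝒯 : Set (Set (Y × X))),
      (⨆ t ∈ ⋃₀ 𝒯, p x t.1 t.2) = ⨆ T ∈ 𝒯, ⨆ t ∈ T, p x t.1 t.2) ∧
    -- the left and right actions commute:
    (∀ f ∈ Lset p, ∀ (x : X) (T : Set (Y × X)),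
      f (⨆ t ∈ T, p x t.1 t.2) = ⨆ t ∈ T, p (f x) t.1 t.2) :=
  bimodule_structure_general p q hp c1a c1b c4
end

section
/- Let X and Y be join semilattices (with bottom element) and suppose there exist surjective join-semilattice morphisms p : X⊗Y⊗X → X and q : Y⊗X⊗Y → Y (where ⊗ is the join-semilattice tensor product) satisfying: (1) p(p(x₁⊗y₁⊗x₂)⊗y₂⊗x₃) = p(x₁⊗q(y₁⊗x₂⊗y₂)⊗x₃) = p(x₁⊗y₁⊗p(x₂⊗y₂⊗x₃)); (2) the symmetric identities for q; (3)-(6) left and right separation for p and q. Then (X,Y) is a Morita equivalence pair between some m-regular m-semilattices. -/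
universe u

/-- A map encoded, via the universal property of the join-semilattice tensor
product, as a map preserving finite joins (binary joins and bottom) in each
variable. -/
def TriFinJoinPreserving {α β γ δ : Type u}
    [SemilatticeSup α] [OrderBot α] [SemilatticeSup β] [OrderBot β]
    [SemilatticeSup γ] [OrderBot γ] [SemilatticeSup δ] [OrderBot δ]
    (p : α → β → γ → δ) : Prop :=
  (∀ x x' y z, p (x ⊔ x') y z = p x y z ⊔ p x' y z) ∧
  (∀ y z, p ⊥ y z = ⊥) ∧
  (∀ x y y' z, p x (y ⊔ y') z = p x y z ⊔ p x y' z) ∧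
  (∀ x z, p x ⊥ z = ⊥) ∧
  (∀ x y z z', p x y (z ⊔ z') = p x y z ⊔ p x y z') ∧
  (∀ x y, p x y ⊥ = ⊥)

/-- An m-semilattice (ω-quantale): a join semilattice with bottom. -/
class SemilatticeSupBot (A : Type u) extends SemilatticeSup A, OrderBot A

/-- The data of a Morita context between m-semilattices `A` and `B` with
equivalence bimodules `X` and `Y`. -/
structure MoritaDataFin (A B X Y : Type u)
    [SemilatticeSupBot A] [SemilatticeSupBot B]
    [SemilatticeSupBot X] [SemilatticeSupBot Y] where
  mulA : A → A → A
  mulB : B → B → B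
  actAX : A → X → X
  actXB : X → B → X
  actBY : B → Y → Y
  actYA : Y → A → Y
  prA : X → Y → A
  prB : Y → X → B

/-- The axioms of a Morita context between m-regular m-semilattices:
everything as for quantales, with finite joins throughout. -/
structure IsMoritaContextFin {A B X Y : Type u}
    [SemilatticeSupBot A] [SemilatticeSupBot B]
    [SemilatticeSupBot X] [SemilatticeSupBot Y]
    (d : MoritaDataFin A B X Y) : Prop where
  -- `A` and `B` are m-semilattices:
  mulA_assoc : ∀ a b c, d.mulA (d.mulA a b) c = d.mulA a (d.mulA b c)
  sup_mulA : ∀ a a' b, d.mulA (a ⊔ a') b = d.mulA a b ⊔ d.mulA a' b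
  bot_mulA : ∀ a, d.mulA ⊥ a = ⊥
  mulA_sup : ∀ a b b', d.mulA a (b ⊔ b') = d.mulA a b ⊔ d.mulA a b'
  mulA_bot : ∀ a, d.mulA a ⊥ = ⊥
  mulB_assoc : ∀ a b c, d.mulB (d.mulB a b) c = d.mulB a (d.mulB b c)
  sup_mulB : ∀ a a' b, d.mulB (a ⊔ a') b = d.mulB a b ⊔ d.mulB a' b
  bot_mulB : ∀ a, d.mulB ⊥ a = ⊥
  mulB_sup : ∀ a b b', d.mulB a (b ⊔ b') = d.mulB a b ⊔ d.mulB a b'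
  mulB_bot : ∀ a, d.mulB a ⊥ = ⊥
  -- `A` and `B` are m-regular:
  essA : ∀ a : A, ∃ s : Finset (A × A), a = s.sup fun t => d.mulA t.1 t.2
  lsepA : ∀ a b : A, (∀ x, d.mulA a x = d.mulA b x) → a = b
  rsepA : ∀ a b : A, (∀ x, d.mulA x a = d.mulA x b) → a = b
  essB : ∀ b : B, ∃ s : Finset (B × B), b = s.sup fun t => d.mulB t.1 t.2
  lsepB : ∀ a b : B, (∀ x, d.mulB a x = d.mulB b x) → a = b
  rsepB : ∀ a b : B, (∀ x, d.mulB x a = d.mulB x b) → a = b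
  -- `X` is an `A,B`-bimodule:
  actAX_mul : ∀ a a' x, d.actAX (d.mulA a a') x = d.actAX a (d.actAX a' x)
  sup_actAX : ∀ a a' x, d.actAX (a ⊔ a') x = d.actAX a x ⊔ d.actAX a' x
  bot_actAX : ∀ x, d.actAX ⊥ x = ⊥
  actAX_sup : ∀ a x x', d.actAX a (x ⊔ x') = d.actAX a x ⊔ d.actAX a x'
  actAX_bot : ∀ a, d.actAX a ⊥ = ⊥
  actXB_mul : ∀ x b b', d.actXB x (d.mulB b b') = d.actXB (d.actXB x b) b'
  sup_actXB : ∀ x x' b, d.actXB (x ⊔ x') b = d.actXB x b ⊔ d.actXB x' b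
  bot_actXB : ∀ b, d.actXB ⊥ b = ⊥
  actXB_sup : ∀ x b b', d.actXB x (b ⊔ b') = d.actXB x b ⊔ d.actXB x b'
  actXB_bot : ∀ x, d.actXB x ⊥ = ⊥
  commX : ∀ a x b, d.actXB (d.actAX a x) b = d.actAX a (d.actXB x b)
  -- `X` is m-regular:
  essXl : ∀ x : X, ∃ s : Finset (A × X), x = s.sup fun t => d.actAX t.1 t.2
  sepXl : ∀ x x' : X, (∀ a, d.actAX a x = d.actAX a x') → x = x'
  essXr : ∀ x : X, ∃ s : Finset (X × B), x = s.sup fun t => d.actXB t.1 t.2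
  sepXr : ∀ x x' : X, (∀ b, d.actXB x b = d.actXB x' b) → x = x'
  -- `Y` is a `B,A`-bimodule:
  actBY_mul : ∀ b b' y, d.actBY (d.mulB b b') y = d.actBY b (d.actBY b' y)
  sup_actBY : ∀ b b' y, d.actBY (b ⊔ b') y = d.actBY b y ⊔ d.actBY b' y
  bot_actBY : ∀ y, d.actBY ⊥ y = ⊥
  actBY_sup : ∀ b y y', d.actBY b (y ⊔ y') = d.actBY b y ⊔ d.actBY b y'
  actBY_bot : ∀ b, d.actBY b ⊥ = ⊥
  actYA_mul : ∀ y a a', d.actYA y (d.mulA a a') = d.actYA (d.actYA y a) a'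
  sup_actYA : ∀ y y' a, d.actYA (y ⊔ y') a = d.actYA y a ⊔ d.actYA y' a
  bot_actYA : ∀ a, d.actYA ⊥ a = ⊥
  actYA_sup : ∀ y a a', d.actYA y (a ⊔ a') = d.actYA y a ⊔ d.actYA y a'
  actYA_bot : ∀ y, d.actYA y ⊥ = ⊥
  commY : ∀ b y a, d.actYA (d.actBY b y) a = d.actBY b (d.actYA y a)
  -- `Y` is m-regular:
  essYl : ∀ y : Y, ∃ s : Finset (B × Y), y = s.sup fun t => d.actBY t.1 t.2
  sepYl : ∀ y y' : Y, (∀ b, d.actBY b y = d.actBY b y') → y = y'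
  essYr : ∀ y : Y, ∃ s : Finset (Y × A), y = s.sup fun t => d.actYA t.1 t.2
  sepYr : ∀ y y' : Y, (∀ a, d.actYA y a = d.actYA y' a) → y = y'
  -- the pairings preserve finite joins in each variable:
  sup_prA : ∀ x x' y, d.prA (x ⊔ x') y = d.prA x y ⊔ d.prA x' y
  bot_prA : ∀ y, d.prA ⊥ y = ⊥
  prA_sup : ∀ x y y', d.prA x (y ⊔ y') = d.prA x y ⊔ d.prA x y'
  prA_bot : ∀ x, d.prA x ⊥ = ⊥
  sup_prB : ∀ y y' x, d.prB (y ⊔ y') x = d.prB y x ⊔ d.prB y' x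
  bot_prB : ∀ x, d.prB ⊥ x = ⊥
  prB_sup : ∀ y x x', d.prB y (x ⊔ x') = d.prB y x ⊔ d.prB y x'
  prB_bot : ∀ y, d.prB y ⊥ = ⊥
  -- the pairings are bimodule maps:
  prA_actA : ∀ a x y, d.prA (d.actAX a x) y = d.mulA a (d.prA x y)
  prA_actY : ∀ x y a, d.prA x (d.actYA y a) = d.mulA (d.prA x y) a
  prB_actB : ∀ b y x, d.prB (d.actBY b y) x = d.mulB b (d.prB y x)
  prB_actX : ∀ y x b, d.prB y (d.actXB x b) = d.mulB (d.prB y x) b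
  -- the pairings are balanced:
  prA_bal : ∀ x b y, d.prA (d.actXB x b) y = d.prA x (d.actBY b y)
  prB_bal : ∀ y a x, d.prB (d.actYA y a) x = d.prB y (d.actAX a x)
  -- the linking identities:
  link₁ : ∀ x₁ y x₂, d.actAX (d.prA x₁ y) x₂ = d.actXB x₁ (d.prB y x₂)
  link₂ : ∀ y₁ x y₂, d.actBY (d.prB y₁ x) y₂ = d.actYA y₁ (d.prA x y₂)
  -- the induced maps on tensor products are surjective:
  surjA : ∀ a : A, ∃ s : Finset (X × Y), a = s.sup fun t => d.prA t.1 t.2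
  surjB : ∀ b : B, ∃ s : Finset (Y × X), b = s.sup fun t => d.prB t.1 t.2

/-!
The m-semilattice `A` is realised inside `End X × (End Y)ᵐᵒᵖ` as the finite joins of the operator
pairs `⟨x, y⟩ = (p x y ·, q · x y)`, and `B` likewise with `p` and `q` exchanged; multiplication
is composition, and the actions and pairings are evaluation. Composition is associative and
bilinear for free. Conditions (1) and (2) give `⟨x, y⟩ ∘ ⟨x', y'⟩ = ⟨p x y x', y'⟩` and
`⟨p x y x', y'⟩ = ⟨x, q y x' y'⟩`, so these joins are closed under composition and
`x ⊗ y ↦ ⟨x, y⟩` is a balanced bimodule map. Surjectivity of `p` and `q` yields the essentiality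
conditions, and (3)–(6) yield separation.
-/

section FinSupSpan

variable {α ι κ : Type*} [SemilatticeSup α] [OrderBot α]

def finSupSpan (f : ι → α) : Set α := {a | ∃ s : Finset ι, a = s.sup f}

namespace finSupSpan

variable {f : ι → α} {a b : α}

lemma apply_mem (i : ι) : f i ∈ finSupSpan f := ⟨{i}, Finset.sup_singleton.symm⟩

lemma bot_mem : ⊥ ∈ finSupSpan f := ⟨∅, Finset.sup_empty.symm⟩

lemma sup_mem (ha : a ∈ finSupSpan f) (hb : b ∈ finSupSpan f) : a ⊔ b ∈ finSupSpan f := by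
  classical
  obtain ⟨s, rfl⟩ := ha
  obtain ⟨t, rfl⟩ := hb
  exact ⟨s ∪ t, Finset.sup_union.symm⟩

@[elab_as_elim]
lemma induction {P : α → Prop} (bot : P ⊥) (sup : ∀ a, P a → ∀ b, P b → P (a ⊔ b))
    (apply : ∀ i, P (f i)) (ha : a ∈ finSupSpan f) : P a := by
  obtain ⟨s, rfl⟩ := ha
  exact Finset.sup_induction bot sup fun i _ => apply i

lemma subset_of_forall_mem {g : κ → α} (h : ∀ i, f i ∈ finSupSpan g) :
    finSupSpan f ⊆ finSupSpan g :=
  fun _ ha => induction bot_mem (fun _ ha _ hb => sup_mem ha hb) h ha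

lemma map_mem {β : Type*} [SemilatticeSup β] [OrderBot β] {φ : α → β}
    (map_sup : ∀ a b, φ (a ⊔ b) = φ a ⊔ φ b) (map_bot : φ ⊥ = ⊥) (ha : a ∈ finSupSpan f) :
    φ a ∈ finSupSpan (φ ∘ f) := by
  obtain ⟨s, rfl⟩ := ha
  exact ⟨s, Finset.apply_sup_eq_sup_comp φ map_sup map_bot⟩

end finSupSpan

lemma SupBotHom.ext_of_mem_finSupSpan {β : Type*} [SemilatticeSup β] [OrderBot β]
    {g h : SupBotHom α β} {f : ι → α} (hf : ∀ a, a ∈ finSupSpan f)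
    (hgh : ∀ i, g (f i) = h (f i)) : g = h :=
  SupBotHom.ext fun a => finSupSpan.induction (P := fun a => g a = h a)
    (by rw [map_bot, map_bot]) (fun a ha b hb => by rw [map_sup, map_sup, ha, hb]) hgh (hf a)

end FinSupSpan

section FinSupSpanType

variable {ι κ : Type*} {α : Type u} [SemilatticeSup α] [OrderBot α]

instance (f : ι → α) : SemilatticeSupBot (finSupSpan f) :=
  { Subtype.semilatticeSup fun _ _ => finSupSpan.sup_mem,
    Subtype.orderBot finSupSpan.bot_mem with }

namespace finSupSpan

variable {f : ι → α}

lemma coe_finset_sup (s : Finset κ) (g : κ → finSupSpan f) :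
    ((s.sup g : finSupSpan f) : α) = s.sup fun k => (g k : α) :=
  Finset.apply_sup_eq_sup_comp Subtype.val (fun _ _ => rfl) rfl

lemma mem_finSupSpan_restrict (a : finSupSpan f) :
    a ∈ finSupSpan fun i => (⟨f i, apply_mem i⟩ : finSupSpan f) := by
  obtain ⟨s, hs⟩ := a.2
  exact ⟨s, Subtype.ext (hs.trans (coe_finset_sup s fun i => ⟨f i, apply_mem i⟩).symm)⟩

end finSupSpan

end FinSupSpanType

namespace MoritaPair

section Conditions

variable {X Y : Type*}

/- Condition (1) is `TernaryAssoc p ∧ MiddleAssoc p q`; condition (2) is the same with `p` and `q`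
exchanged. -/

def TernaryAssoc (p : X → Y → X → X) : Prop :=
  ∀ (x₁ x₂ x₃ : X) (y₁ y₂ : Y), p (p x₁ y₁ x₂) y₂ x₃ = p x₁ y₁ (p x₂ y₂ x₃)

def MiddleAssoc (p : X → Y → X → X) (q : Y → X → Y → Y) : Prop :=
  ∀ (x₁ x₂ x₃ : X) (y₁ y₂ : Y), p (p x₁ y₁ x₂) y₂ x₃ = p x₁ (q y₁ x₂ y₂) x₃

end Conditions

section General

variable {X Y : Type u} [SemilatticeSup X] [OrderBot X] [SemilatticeSup Y] [OrderBot Y]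

abbrev EndPair (X Y : Type u) [SemilatticeSup X] [OrderBot X] [SemilatticeSup Y] [OrderBot Y] :=
  SupBotHom X X × SupBotHom Y Y

namespace EndPair

instance : Mul (EndPair X Y) := ⟨fun v w => (v.1.comp w.1, w.2.comp v.2)⟩

lemma ext {v w : EndPair X Y} (h₁ : ∀ x, v.1 x = w.1 x) (h₂ : ∀ y, v.2 y = w.2 y) : v = w :=
  Prod.ext (SupBotHom.ext h₁) (SupBotHom.ext h₂)

lemma mul_assoc (u v w : EndPair X Y) : u * v * w = u * (v * w) := rfl

lemma sup_mul (u u' v : EndPair X Y) : (u ⊔ u') * v = u * v ⊔ u' * v :=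
  ext (fun _ => rfl) fun _ => map_sup v.2 _ _

lemma mul_sup (u v v' : EndPair X Y) : u * (v ⊔ v') = u * v ⊔ u * v' :=
  ext (fun _ => map_sup u.1 _ _) fun _ => rfl

lemma bot_mul (v : EndPair X Y) : ⊥ * v = ⊥ :=
  ext (fun _ => rfl) fun _ => map_bot v.2

lemma mul_bot (u : EndPair X Y) : u * ⊥ = ⊥ :=
  ext (fun _ => map_bot u.1) fun _ => rfl

end EndPair

variable {p : X → Y → X → X} {q : Y → X → Y → Y}
  (hp : TriFinJoinPreserving p) (hq : TriFinJoinPreserving q)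

def gen (x : X) (y : Y) : EndPair X Y :=
  (⟨⟨p x y, hp.2.2.2.2.1 x y⟩, hp.2.2.2.2.2 x y⟩, ⟨⟨(q · x y), fun a b => hq.1 a b x y⟩, hq.2.1 x y⟩)

lemma gen_sup_left (x x' : X) (y : Y) : gen hp hq (x ⊔ x') y = gen hp hq x y ⊔ gen hp hq x' y :=
  EndPair.ext (fun z => hp.1 x x' y z) fun w => hq.2.2.1 w x x' y

lemma gen_bot_left (y : Y) : gen hp hq ⊥ y = ⊥ :=
  EndPair.ext (fun z => hp.2.1 y z) fun w => hq.2.2.2.1 w y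

lemma gen_sup_right (x : X) (y y' : Y) :
    gen hp hq x (y ⊔ y') = gen hp hq x y ⊔ gen hp hq x y' :=
  EndPair.ext (fun z => hp.2.2.1 x y y' z) fun w => hq.2.2.2.2.1 w x y y'

lemma gen_bot_right (x : X) : gen hp hq x ⊥ = ⊥ :=
  EndPair.ext (fun z => hp.2.2.2.1 x z) fun w => hq.2.2.2.2.2 w x

lemma gen_mul_gen (c1b : TernaryAssoc p) (c2a : MiddleAssoc q p) (x x' : X) (y y' : Y) :
    gen hp hq x y * gen hp hq x' y' = gen hp hq (p x y x') y' :=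
  EndPair.ext (fun z => (c1b x x' z y y').symm) fun w => c2a w y y' x x'

/-- The m-semilattice `A` of the Morita context. -/
abbrev genSpan : Set (EndPair X Y) := finSupSpan fun t : X × Y => gen hp hq t.1 t.2

lemma gen_mem (x : X) (y : Y) : gen hp hq x y ∈ genSpan hp hq := finSupSpan.apply_mem (x, y)

lemma eq_of_mul_gen_eq (psurj : ∀ x, x ∈ finSupSpan fun t : X × Y × X => p t.1 t.2.1 t.2.2)
    (c6 : ∀ y₁ y₂ : Y, (∀ (x : X) (y : Y), q y₁ x y = q y₂ x y) → y₁ = y₂)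
    {v w : EndPair X Y} (h : ∀ x y, v * gen hp hq x y = w * gen hp hq x y) : v = w :=
  Prod.ext
    (SupBotHom.ext_of_mem_finSupSpan psurj fun t => congrArg (fun u => u.1 t.2.2) (h t.1 t.2.1))
    (SupBotHom.ext fun u => c6 _ _ fun x y => congrArg (fun r => r.2 u) (h x y))

lemma eq_of_gen_mul_eq (qsurj : ∀ y, y ∈ finSupSpan fun t : Y × X × Y => q t.1 t.2.1 t.2.2)
    (c3 : ∀ x₁ x₂ : X, (∀ (x : X) (y : Y), p x y x₁ = p x y x₂) → x₁ = x₂)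
    {v w : EndPair X Y} (h : ∀ x y, gen hp hq x y * v = gen hp hq x y * w) : v = w :=
  Prod.ext (SupBotHom.ext fun z => c3 _ _ fun x y => congrArg (fun r => r.1 z) (h x y))
    (SupBotHom.ext_of_mem_finSupSpan qsurj fun t => congrArg (fun u => u.2 t.1) (h t.2.1 t.2.2))

def spanGen (x : X) (y : Y) : genSpan hp hq := ⟨gen hp hq x y, gen_mem hp hq x y⟩

variable {hp hq}

lemma mul_mem (c1b : TernaryAssoc p) (c2a : MiddleAssoc q p) {v w : EndPair X Y}
    (hv : v ∈ genSpan hp hq) (hw : w ∈ genSpan hp hq) : v * w ∈ genSpan hp hq := by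
  refine finSupSpan.induction ?_ (fun a ha b hb => ?_) (fun s => ?_) hv
  · rw [EndPair.bot_mul]; exact finSupSpan.bot_mem
  · rw [EndPair.sup_mul]; exact finSupSpan.sup_mem ha hb
  refine finSupSpan.induction ?_ (fun a ha b hb => ?_) (fun t => ?_) hw
  · rw [EndPair.mul_bot]; exact finSupSpan.bot_mem
  · rw [EndPair.mul_sup]; exact finSupSpan.sup_mem ha hb
  · rw [gen_mul_gen hp hq c1b c2a]; exact gen_mem hp hq _ _

lemma gen_fst_eq_mul (c1b : TernaryAssoc p) (c2a : MiddleAssoc q p) {v : EndPair X Y}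
    (hv : v ∈ genSpan hp hq) (x : X) (y : Y) : gen hp hq (v.1 x) y = v * gen hp hq x y := by
  refine finSupSpan.induction ?_ (fun a ha b hb => ?_) (fun t => ?_) hv
  · rw [Prod.fst_bot, SupBotHom.bot_apply, gen_bot_left, EndPair.bot_mul]
  · rw [Prod.fst_sup, SupBotHom.sup_apply, gen_sup_left, EndPair.sup_mul, ha, hb]
  · exact (gen_mul_gen hp hq c1b c2a _ _ _ _).symm

lemma gen_snd_eq_mul (c1a : MiddleAssoc p q) (c1b : TernaryAssoc p) (c2b : TernaryAssoc q)
    {v : EndPair X Y} (hv : v ∈ genSpan hp hq) (x : X) (y : Y) :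
    gen hp hq x (v.2 y) = gen hp hq x y * v := by
  refine finSupSpan.induction ?_ (fun a ha b hb => ?_) (fun t => ?_) hv
  · rw [Prod.snd_bot, SupBotHom.bot_apply, gen_bot_right, EndPair.mul_bot]
  · rw [Prod.snd_sup, SupBotHom.sup_apply, gen_sup_right, EndPair.mul_sup, ha, hb]
  · exact EndPair.ext (fun z => (c1a x t.1 z y t.2).symm.trans (c1b x t.1 z y t.2))
      fun w => (c2b w y t.2 x t.1).symm

lemma gen_snd_eq_gen_fst (c1a : MiddleAssoc p q) (c2a : MiddleAssoc q p) (c2b : TernaryAssoc q)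
    {w : EndPair Y X} (hw : w ∈ genSpan hq hp) (x : X) (y : Y) :
    gen hp hq (w.2 x) y = gen hp hq x (w.1 y) := by
  refine finSupSpan.induction ?_ (fun a ha b hb => ?_) (fun t => ?_) hw
  · rw [Prod.snd_bot, Prod.fst_bot, SupBotHom.bot_apply, SupBotHom.bot_apply, gen_bot_left,
      gen_bot_right]
  · rw [Prod.snd_sup, Prod.fst_sup, SupBotHom.sup_apply, SupBotHom.sup_apply, gen_sup_left,
      gen_sup_right, ha, hb]
  · exact EndPair.ext (fun z => c1a x t.2 z t.1 y)
      fun w => (c2a w t.1 y x t.2).symm.trans (c2b w t.1 y x t.2)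

lemma snd_fst_comm (c1b : TernaryAssoc p) {v : EndPair X Y} (hv : v ∈ genSpan hp hq)
    {w : EndPair Y X} (hw : w ∈ genSpan hq hp) (x : X) : w.2 (v.1 x) = v.1 (w.2 x) := by
  refine finSupSpan.induction (P := fun v : EndPair X Y => ∀ x, w.2 (v.1 x) = v.1 (w.2 x))
    (fun x => map_bot w.2) (fun a ha b hb x => ?_) (fun s => ?_) hv x
  · rw [Prod.fst_sup, SupBotHom.sup_apply, SupBotHom.sup_apply, map_sup, ha, hb]
  let g := (gen hp hq s.1 s.2).1
  refine finSupSpan.induction (P := fun w : EndPair Y X => ∀ x, w.2 (g x) = g (w.2 x))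
    (fun x => (map_bot g).symm) (fun a ha b hb x => ?_) (fun t x => c1b s.1 x t.2 s.2 t.1) hw
  rw [Prod.snd_sup, SupBotHom.sup_apply, SupBotHom.sup_apply, ha, hb, map_sup]

def spanMul (c1b : TernaryAssoc p) (c2a : MiddleAssoc q p) (a b : genSpan hp hq) :
    genSpan hp hq :=
  ⟨a * b, mul_mem c1b c2a a.2 b.2⟩

lemma spanMul_spanGen (c1b : TernaryAssoc p) (c2a : MiddleAssoc q p) (x x' : X) (y y' : Y) :
    spanMul c1b c2a (spanGen hp hq x y) (spanGen hp hq x' y') = spanGen hp hq (p x y x') y' :=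
  Subtype.ext (gen_mul_gen hp hq c1b c2a x x' y y')

lemma spanGen_sup_left (x x' : X) (y : Y) :
    spanGen hp hq (x ⊔ x') y = spanGen hp hq x y ⊔ spanGen hp hq x' y :=
  Subtype.ext (gen_sup_left hp hq x x' y)

lemma spanGen_bot_left (y : Y) : spanGen hp hq ⊥ y = ⊥ := Subtype.ext (gen_bot_left hp hq y)

lemma spanGen_sup_right (x : X) (y y' : Y) :
    spanGen hp hq x (y ⊔ y') = spanGen hp hq x y ⊔ spanGen hp hq x y' :=
  Subtype.ext (gen_sup_right hp hq x y y')

lemma spanGen_bot_right (x : X) : spanGen hp hq x ⊥ = ⊥ := Subtype.ext (gen_bot_right hp hq x)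

lemma mem_finSupSpan_spanGen (a : genSpan hp hq) :
    a ∈ finSupSpan fun t : X × Y => spanGen hp hq t.1 t.2 :=
  finSupSpan.mem_finSupSpan_restrict a

lemma mem_finSupSpan_spanMul (psurj : ∀ x, x ∈ finSupSpan fun t : X × Y × X => p t.1 t.2.1 t.2.2)
    (c1b : TernaryAssoc p) (c2a : MiddleAssoc q p) (a : genSpan hp hq) :
    a ∈ finSupSpan fun t : genSpan hp hq × genSpan hp hq => spanMul c1b c2a t.1 t.2 := by
  refine finSupSpan.subset_of_forall_mem (fun t => ?_) (mem_finSupSpan_spanGen a)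
  have hgen := finSupSpan.map_mem (φ := (spanGen hp hq · t.2))
    (fun x x' => spanGen_sup_left x x' t.2) (spanGen_bot_left t.2) (psurj t.1)
  refine finSupSpan.subset_of_forall_mem (fun r => ?_) hgen
  rw [Function.comp_apply, ← spanMul_spanGen c1b c2a]
  exact finSupSpan.apply_mem (spanGen hp hq r.1 r.2.1, spanGen hp hq r.2.2 t.2)

variable (hp hq)

lemma mem_finSupSpan_fst_apply
    (psurj : ∀ x, x ∈ finSupSpan fun t : X × Y × X => p t.1 t.2.1 t.2.2) (x : X) :
    x ∈ finSupSpan fun t : genSpan hp hq × X => t.1.1.1 t.2 :=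
  finSupSpan.subset_of_forall_mem
    (fun t : X × Y × X => finSupSpan.apply_mem (spanGen hp hq t.1 t.2.1, t.2.2)) (psurj x)

lemma mem_finSupSpan_snd_apply
    (psurj : ∀ x, x ∈ finSupSpan fun t : X × Y × X => p t.1 t.2.1 t.2.2) (x : X) :
    x ∈ finSupSpan fun t : X × genSpan hq hp => t.2.1.2 t.1 :=
  finSupSpan.subset_of_forall_mem
    (fun t : X × Y × X => finSupSpan.apply_mem (t.1, spanGen hq hp t.2.1 t.2.2)) (psurj x)

end General

variable {X Y : Type u} [SemilatticeSupBot X] [SemilatticeSupBot Y]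
  {p : X → Y → X → X} {q : Y → X → Y → Y}
  (hp : TriFinJoinPreserving p) (hq : TriFinJoinPreserving q)

def moritaData (c1a : MiddleAssoc p q) (c1b : TernaryAssoc p) (c2a : MiddleAssoc q p)
    (c2b : TernaryAssoc q) : MoritaDataFin (genSpan hp hq) (genSpan hq hp) X Y where
  mulA := spanMul c1b c2a
  mulB := spanMul c2b c1a
  actAX a x := a.1.1 x
  actXB x b := b.1.2 x
  actBY b y := b.1.1 y
  actYA y a := a.1.2 y
  prA := spanGen hp hq
  prB := spanGen hq hp

theorem isMoritaContextFin_moritaData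
    (psurj : ∀ x, x ∈ finSupSpan fun t : X × Y × X => p t.1 t.2.1 t.2.2)
    (qsurj : ∀ y, y ∈ finSupSpan fun t : Y × X × Y => q t.1 t.2.1 t.2.2)
    (c1a : MiddleAssoc p q) (c1b : TernaryAssoc p) (c2a : MiddleAssoc q p) (c2b : TernaryAssoc q)
    (c3 : ∀ x₁ x₂ : X, (∀ (x : X) (y : Y), p x y x₁ = p x y x₂) → x₁ = x₂)
    (c4 : ∀ x₁ x₂ : X, (∀ (y : Y) (x : X), p x₁ y x = p x₂ y x) → x₁ = x₂)
    (c5 : ∀ y₁ y₂ : Y, (∀ (y : Y) (x : X), q y x y₁ = q y x y₂) → y₁ = y₂)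
    (c6 : ∀ y₁ y₂ : Y, (∀ (x : X) (y : Y), q y₁ x y = q y₂ x y) → y₁ = y₂) :
    IsMoritaContextFin (moritaData hp hq c1a c1b c2a c2b) where
  mulA_assoc a b c := Subtype.ext (EndPair.mul_assoc a.1 b.1 c.1)
  sup_mulA a a' b := Subtype.ext (EndPair.sup_mul a.1 a'.1 b.1)
  bot_mulA a := Subtype.ext (EndPair.bot_mul a.1)
  mulA_sup a b b' := Subtype.ext (EndPair.mul_sup a.1 b.1 b'.1)
  mulA_bot a := Subtype.ext (EndPair.mul_bot a.1)
  mulB_assoc a b c := Subtype.ext (EndPair.mul_assoc a.1 b.1 c.1)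
  sup_mulB a a' b := Subtype.ext (EndPair.sup_mul a.1 a'.1 b.1)
  bot_mulB a := Subtype.ext (EndPair.bot_mul a.1)
  mulB_sup a b b' := Subtype.ext (EndPair.mul_sup a.1 b.1 b'.1)
  mulB_bot a := Subtype.ext (EndPair.mul_bot a.1)
  essA := mem_finSupSpan_spanMul psurj c1b c2a
  lsepA _ _ h := Subtype.ext <| eq_of_mul_gen_eq hp hq psurj c6 fun x y =>
    congrArg Subtype.val (h (spanGen hp hq x y))
  rsepA _ _ h := Subtype.ext <| eq_of_gen_mul_eq hp hq qsurj c3 fun x y =>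
    congrArg Subtype.val (h (spanGen hp hq x y))
  essB := mem_finSupSpan_spanMul qsurj c2b c1a
  lsepB _ _ h := Subtype.ext <| eq_of_mul_gen_eq hq hp qsurj c4 fun y x =>
    congrArg Subtype.val (h (spanGen hq hp y x))
  rsepB _ _ h := Subtype.ext <| eq_of_gen_mul_eq hq hp psurj c5 fun y x =>
    congrArg Subtype.val (h (spanGen hq hp y x))
  actAX_mul _ _ _ := rfl
  sup_actAX _ _ _ := rfl
  bot_actAX _ := rfl
  actAX_sup a := map_sup a.1.1
  actAX_bot a := map_bot a.1.1
  actXB_mul _ _ _ := rfl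
  sup_actXB x x' b := map_sup b.1.2 x x'
  bot_actXB b := map_bot b.1.2
  actXB_sup _ _ _ := rfl
  actXB_bot _ := rfl
  commX a x b := snd_fst_comm c1b a.2 b.2 x
  essXl := mem_finSupSpan_fst_apply hp hq psurj
  sepXl x x' h := c3 x x' fun x'' y => h (spanGen hp hq x'' y)
  essXr := mem_finSupSpan_snd_apply hp hq psurj
  sepXr x x' h := c4 x x' fun y x'' => h (spanGen hq hp y x'')
  actBY_mul _ _ _ := rfl
  sup_actBY _ _ _ := rfl
  bot_actBY _ := rfl
  actBY_sup b := map_sup b.1.1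
  actBY_bot b := map_bot b.1.1
  actYA_mul _ _ _ := rfl
  sup_actYA y y' a := map_sup a.1.2 y y'
  bot_actYA a := map_bot a.1.2
  actYA_sup _ _ _ := rfl
  actYA_bot _ := rfl
  commY b y a := snd_fst_comm c2b b.2 a.2 y
  essYl := mem_finSupSpan_fst_apply hq hp qsurj
  sepYl y y' h := c5 y y' fun y'' x => h (spanGen hq hp y'' x)
  essYr := mem_finSupSpan_snd_apply hq hp qsurj
  sepYr y y' h := c6 y y' fun x y'' => h (spanGen hp hq x y'')
  sup_prA := spanGen_sup_left
  bot_prA := spanGen_bot_left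
  prA_sup := spanGen_sup_right
  prA_bot := spanGen_bot_right
  sup_prB := spanGen_sup_left
  bot_prB := spanGen_bot_left
  prB_sup := spanGen_sup_right
  prB_bot := spanGen_bot_right
  prA_actA a x y := Subtype.ext (gen_fst_eq_mul c1b c2a a.2 x y)
  prA_actY x y a := Subtype.ext (gen_snd_eq_mul c1a c1b c2b a.2 x y)
  prB_actB b y x := Subtype.ext (gen_fst_eq_mul c2b c1a b.2 y x)
  prB_actX y x b := Subtype.ext (gen_snd_eq_mul c2a c2b c1b b.2 y x)
  prA_bal x b y := Subtype.ext (gen_snd_eq_gen_fst c1a c2a c2b b.2 x y)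
  prB_bal y a x := Subtype.ext (gen_snd_eq_gen_fst c2a c1a c1b a.2 y x)
  link₁ _ _ _ := rfl
  link₂ _ _ _ := rfl
  surjA := mem_finSupSpan_spanGen
  surjB := mem_finSupSpan_spanGen

end MoritaPair


/-- conditions (1)-(6) on surjective finite-join-preserving
`p`, `q` between join semilattices make `(X,Y)` a Morita equivalence pair
between m-regular m-semilattices. -/
theorem morita_pair_of_conditions_fin {X Y : Type u}
    [SemilatticeSupBot X] [SemilatticeSupBot Y]
    (p : X → Y → X → X) (q : Y → X → Y → Y)
    (hp : TriFinJoinPreserving p) (hq : TriFinJoinPreserving q)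
    -- surjectivity (every element is a finite join of values):
    (psurj : ∀ x : X, ∃ s : Finset (X × Y × X),
      x = s.sup fun t => p t.1 t.2.1 t.2.2)
    (qsurj : ∀ y : Y, ∃ s : Finset (Y × X × Y),
      y = s.sup fun t => q t.1 t.2.1 t.2.2)
    -- condition (1):
    (c1a : ∀ (x₁ x₂ x₃ : X) (y₁ y₂ : Y),
      p (p x₁ y₁ x₂) y₂ x₃ = p x₁ (q y₁ x₂ y₂) x₃)
    (c1b : ∀ (x₁ x₂ x₃ : X) (y₁ y₂ : Y),
      p (p x₁ y₁ x₂) y₂ x₃ = p x₁ y₁ (p x₂ y₂ x₃))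
    -- condition (2):
    (c2a : ∀ (y₁ y₂ y₃ : Y) (x₁ x₂ : X),
      q (q y₁ x₁ y₂) x₂ y₃ = q y₁ (p x₁ y₂ x₂) y₃)
    (c2b : ∀ (y₁ y₂ y₃ : Y) (x₁ x₂ : X),
      q (q y₁ x₁ y₂) x₂ y₃ = q y₁ x₁ (q y₂ x₂ y₃))
    -- conditions (3)-(6):
    (c3 : ∀ x₁ x₂ : X, (∀ (x : X) (y : Y), p x y x₁ = p x y x₂) → x₁ = x₂)
    (c4 : ∀ x₁ x₂ : X, (∀ (y : Y) (x : X), p x₁ y x = p x₂ y x) → x₁ = x₂)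
    (c5 : ∀ y₁ y₂ : Y, (∀ (y : Y) (x : X), q y x y₁ = q y x y₂) → y₁ = y₂)
    (c6 : ∀ y₁ y₂ : Y, (∀ (x : X) (y : Y), q y₁ x y = q y₂ x y) → y₁ = y₂) :
    ∃ (A : Type u) (iA : SemilatticeSupBot A) (B : Type u)
      (iB : SemilatticeSupBot B)
      (d : @MoritaDataFin A B X Y iA iB _ _),
      @IsMoritaContextFin A B X Y iA iB _ _ d :=
  ⟨MoritaPair.genSpan hp hq, inferInstance, MoritaPair.genSpan hq hp, inferInstance,
    MoritaPair.moritaData hp hq c1a c1b c2a c2b,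
    MoritaPair.isMoritaContextFin_moritaData hp hq psurj qsurj c1a c1b c2a c2b c3 c4 c5 c6⟩
end
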